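/- arXiv:1906.09558 — 7 statements merged into one kernel-verified Lean document; each statement's English description precedes it below -/
import Mathlib

section
/- Lemma 2.3. Let Ω ⊆ ℝ^d be locally polyhedral near a point z̄ ∈ Ω. Then the limiting normal cone satisfies N_Ω(z̄) = ⋃_{w ∈ T_Ω(z̄)} N̂_{T_Ω(z̄)}(w). -/
open Set Filter Metric Pointwise
open scoped RealInnerProductSpace

noncomputable section

/-- Euclidean `n`-space. -/
abbrev Euc (n : ℕ) : Type := EuclideanSpace ℝ (Fin n)

/-- Bouligand tangent (contingent) cone. -/
def tangCone {E : Type*} [AddCommMonoid E] [SMul ℝ E] [TopologicalSpace E]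
    (Ω : Set E) (z : E) : Set E :=
  {u | ∃ (t : ℕ → ℝ) (w : ℕ → E), (∀ k, 0 < t k) ∧
    Tendsto t atTop (nhds 0) ∧ Tendsto w atTop (nhds u) ∧ ∀ k, z + t k • w k ∈ Ω}

section InnerDefs

variable {E F : Type*} [NormedAddCommGroup E] [InnerProductSpace ℝ E]
  [NormedAddCommGroup F] [InnerProductSpace ℝ F]

/-- Polar cone of a set. -/
def polarCone (S : Set E) : Set E := {x | ∀ u ∈ S, ⟪x, u⟫ ≤ 0}

/-- Fréchet (regular) normal cone. -/
def regNormal (Ω : Set E) (z : E) : Set E := polarCone (tangCone Ω z)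

/-- Mordukhovich (limiting) normal cone. -/
def limNormal (Ω : Set E) (z : E) : Set E :=
  {x | ∃ (zk xk : ℕ → E), (∀ k, zk k ∈ Ω) ∧ Tendsto zk atTop (nhds z) ∧
    (∀ k, xk k ∈ regNormal Ω (zk k)) ∧ Tendsto xk atTop (nhds x)}

/-- Graph of the regular normal cone mapping. -/
def gphRegNormal (Ω : Set E) : Set (E × E) := {p | p.1 ∈ Ω ∧ p.2 ∈ regNormal Ω p.1}

/-- Normal cone (in the sense of convex analysis). -/
def cvxNormal (C : Set E) (z : E) : Set E := {x | ∀ y ∈ C, ⟪x, y - z⟫ ≤ 0}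

/-- Graph of the convex normal cone mapping. -/
def gphCvxNormal (C : Set E) : Set (E × E) := {p | p.1 ∈ C ∧ p.2 ∈ cvxNormal C p.1}

/-- Critical cone `K_C(z,z*) = T_C(z) ∩ [z*]^⊥`. -/
def critCone (C : Set E) (z zs : E) : Set E :=
  tangCone C z ∩ {u | ⟪zs, u⟫ = 0}

/-- Polar cone of a set of pairs (w.r.t. the natural inner product of the product). -/
def polarConeP (S : Set (E × F)) : Set (E × F) :=
  {x | ∀ u ∈ S, ⟪x.1, u.1⟫ + ⟪x.2, u.2⟫ ≤ 0}

/-- Regular normal cone for sets of pairs. -/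
def regNormalP (Ω : Set (E × F)) (z : E × F) : Set (E × F) := polarConeP (tangCone Ω z)

/-- Convex normal cone for sets of pairs. -/
def cvxNormalP (C : Set (E × F)) (z : E × F) : Set (E × F) :=
  {x | ∀ y ∈ C, ⟪x.1, y.1 - z.1⟫ + ⟪x.2, y.2 - z.2⟫ ≤ 0}

/-- Graph of the convex normal cone mapping, for sets of pairs. -/
def gphCvxNormalP (C : Set (E × F)) : Set ((E × F) × (E × F)) :=
  {p | p.1 ∈ C ∧ p.2 ∈ cvxNormalP C p.1}

/-- Critical cone for sets of pairs. -/
def critConeP (C : Set (E × F)) (z zs : E × F) : Set (E × F) :=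
  tangCone C z ∩ {u | ⟪zs.1, u.1⟫ + ⟪zs.2, u.2⟫ = 0}

end InnerDefs

/-- `S⁺ = span (S - S)`, the subspace parallel to the affine hull. -/
def plusSpan {E : Type*} [AddCommGroup E] [Module ℝ E] (S : Set E) : Set E :=
  ↑(Submodule.span ℝ (S - S))

/-- Generalized lineality space: the largest subspace `L` with `C + L ⊆ C`. -/
def linealSpace {E : Type*} [AddCommGroup E] [Module ℝ E] (C : Set E) : Set E :=
  ↑(sSup {L : Submodule ℝ E | C + (L : Set E) ⊆ C})

/-- Metric subregularity of a set-valued map at a point of its graph. -/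
def MetrSubregAt {α β : Type*} [PseudoMetricSpace α] [PseudoMetricSpace β]
    (M : α → Set β) (zb : α) (wb : β) : Prop :=
  ∃ κ > (0:ℝ), ∃ ε > (0:ℝ), ∀ z, dist z zb < ε →
    infDist z {z' | wb ∈ M z'} ≤ κ * infDist wb (M z)

/-- Metric regularity of a set-valued map around a point of its graph. -/
def MetrRegAround {α β : Type*} [PseudoMetricSpace α] [PseudoMetricSpace β]
    (M : α → Set β) (zb : α) (wb : β) : Prop :=
  ∃ κ > (0:ℝ), ∃ ε > (0:ℝ), ∀ z, dist z zb < ε → ∀ w, dist w wb < ε →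
    infDist z {z' | w ∈ M z'} ≤ κ * infDist w (M z)

/-- Convex polyhedral set: finite intersection of closed halfspaces. -/
def ConvexPolyhedral {E : Type*} [NormedAddCommGroup E] [NormedSpace ℝ E]
    (C : Set E) : Prop :=
  ∃ (N : ℕ) (a : Fin N → (E →L[ℝ] ℝ)) (α : Fin N → ℝ), C = {z | ∀ i, a i z ≤ α i}

/-- Polyhedral set: finite union of convex polyhedral sets. -/
def IsPolyhedral {E : Type*} [NormedAddCommGroup E] [NormedSpace ℝ E]
    (C : Set E) : Prop :=
  ∃ (N : ℕ) (Cs : Fin N → Set E), (∀ i, ConvexPolyhedral (Cs i)) ∧ C = ⋃ i, Cs i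

/-- `Ω` coincides with a polyhedral set near `c`. -/
def LocallyPolyhedralNear {E : Type*} [NormedAddCommGroup E] [NormedSpace ℝ E]
    (Ω : Set E) (c : E) : Prop :=
  ∃ W ∈ nhds c, ∃ C, IsPolyhedral C ∧ Ω ∩ W = C ∩ W

/-- A face of a convex set: a convex extreme subset. -/
def IsFace {E : Type*} [AddCommGroup E] [Module ℝ E] (K Fc : Set E) : Prop :=
  Convex ℝ Fc ∧ IsExtreme ℝ K Fc

section MPEC

variable {n m p q : ℕ}

/-- Lower level feasible set `Γ = {y : g(y) ≤ 0}`. -/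
def Gam (g : Euc m → Euc q) : Set (Euc m) := {y | ∀ i, g y i ≤ 0}

/-- Gradient of the `i`-th component of `g` at `yb`. -/
def gradg (g : Euc m → Euc q) (yb : Euc m) (i : Fin q) : Euc m :=
  gradient (fun y => g y i) yb

/-- Hessian of the `i`-th component of `g` at `yb`. -/
def hessg (g : Euc m → Euc q) (yb : Euc m) (i : Fin q) : Euc m →L[ℝ] Euc m :=
  fderiv ℝ (gradient fun y => g y i) yb

/-- `∇²(λᵀg)(yb) v`. -/
def hessLam (g : Euc m → Euc q) (yb : Euc m) (lam : Euc q) (v : Euc m) : Euc m :=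
  ∑ i, lam i • hessg g yb i v

/-- The vector `vᵀ∇²g(yb)w ∈ ℝ^q` with components `vᵀ∇²g_i(yb)w`. -/
def quadg (g : Euc m → Euc q) (yb : Euc m) (v w : Euc m) : Euc q :=
  WithLp.toLp 2 (fun i => ⟪v, hessg g yb i w⟫)

/-- Critical cone `K̄_Γ` of the lower level system at `(yb, ysb)`. -/
def KbarS (g : Euc m → Euc q) (yb ysb : Euc m) : Set (Euc m) :=
  {v | (∀ i, g yb i = 0 → ⟪gradg g yb i, v⟫ ≤ 0) ∧ ⟪ysb, v⟫ = 0}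

/-- Multiplier set `Λ̄`. -/
def LamS (g : Euc m → Euc q) (yb ysb : Euc m) : Set (Euc q) :=
  {lam | (∀ i, 0 ≤ lam i) ∧ (∀ i, g yb i < 0 → lam i = 0) ∧
    ∑ i, lam i • gradg g yb i = ysb}

/-- Directional multiplier set `Λ̄(v)`. -/
def LamDir (g : Euc m → Euc q) (yb ysb : Euc m) (v : Euc m) : Set (Euc q) :=
  {lam | lam ∈ LamS g yb ysb ∧
    ∀ mu ∈ LamS g yb ysb, ⟪v, hessLam g yb mu v⟫ ≤ ⟪v, hessLam g yb lam v⟫}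

/-- `g` is 2-nondegenerate in direction `vb` at `(yb, ysb)`. -/
def TwoNondeg (g : Euc m → Euc q) (yb ysb vb : Euc m) : Prop :=
  ∀ mu : Euc q, hessLam g yb mu vb ∈ plusSpan (cvxNormal (KbarS g yb ysb) vb) →
    mu ∈ plusSpan (LamDir g yb ysb vb) → mu = 0

/-- Strict complementarity index set `J̄⁺(λ)` . -/
def JplusLam (g : Euc m → Euc q) (yb : Euc m) (lam : Euc q) : Set (Fin q) :=
  {i | g yb i = 0 ∧ 0 < lam i}

/-- `J̄⁺(Ξ) = ⋃_{λ ∈ Ξ} J̄⁺(λ)`. -/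
def JplusSet (g : Euc m → Euc q) (yb : Euc m) (Xi : Set (Euc q)) : Set (Fin q) :=
  ⋃ lam ∈ Xi, JplusLam g yb lam

/-- Active index set `Ī(v)`. -/
def IbarV (g : Euc m → Euc q) (yb : Euc m) (v : Euc m) : Set (Fin q) :=
  {i | g yb i = 0 ∧ ⟪gradg g yb i, v⟫ = 0}

/-- The set-valued map `y ⇒ g(y) − ℝ^q_-`. -/
def lowerMap (g : Euc m → Euc q) (y : Euc m) : Set (Euc q) :=
  {w | ∃ c : Euc q, (∀ i, c i ≤ 0) ∧ w = g y - c}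

/-- MPEC feasible set. -/
def MPECfeas (φ : Euc n × Euc m → Euc m) (G : Euc n × Euc m → Euc p)
    (g : Euc m → Euc q) : Set (Euc n × Euc m) :=
  {z | -φ z ∈ regNormal (Gam g) z.2 ∧ ∀ i, G z i ≤ 0}

/-- `(xb,yb)` is a local minimizer of (MPEC). -/
def IsLocalMinMPEC (Fobj : Euc n × Euc m → ℝ) (φ : Euc n × Euc m → Euc m)
    (G : Euc n × Euc m → Euc p) (g : Euc m → Euc q) (zb : Euc n × Euc m) : Prop :=
  zb ∈ MPECfeas φ G g ∧
    ∃ ε > (0:ℝ), ∀ z ∈ MPECfeas φ G g, dist z zb < ε → Fobj zb ≤ Fobj z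

/-- The constraint map `P(x,y) = ((y, −φ(x,y)), G(x,y))`. -/
def Pmp (φ : Euc n × Euc m → Euc m) (G : Euc n × Euc m → Euc p)
    (z : Euc n × Euc m) : (Euc m × Euc m) × Euc p := ((z.2, -φ z), G z)

/-- The constraint set `D = gph N̂_Γ × ℝ^p_-`. -/
def Dmp (g : Euc m → Euc q) : Set ((Euc m × Euc m) × Euc p) :=
  (gphRegNormal (Gam g)) ×ˢ {a : Euc p | ∀ i, a i ≤ 0}

/-- The linearization `∇P(zb)(u,v)`. -/
def DPmp (φ : Euc n × Euc m → Euc m) (G : Euc n × Euc m → Euc p)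
    (zb uv : Euc n × Euc m) : (Euc m × Euc m) × Euc p :=
  ((uv.2, -(fderiv ℝ φ zb uv)), fderiv ℝ G zb uv)

/-- The generalized Guignard constraint qualification at `zb` for the system `P(x,y) ∈ D`. -/
def GGCQmp (φ : Euc n × Euc m → Euc m) (G : Euc n × Euc m → Euc p)
    (g : Euc m → Euc q) (zb : Euc n × Euc m) : Prop :=
  regNormalP {z | Pmp φ G z ∈ Dmp (p := p) g} zb
    = polarConeP {uv | DPmp φ G zb uv ∈ tangCone (Dmp (p := p) g) (Pmp φ G zb)}

/-- The linearized set-valued map `(u,v) ⇒ ∇P(zb)(u,v) − T_D(P(zb))`. -/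
def linMap (φ : Euc n × Euc m → Euc m) (G : Euc n × Euc m → Euc p)
    (g : Euc m → Euc q) (zb uv : Euc n × Euc m) : Set ((Euc m × Euc m) × Euc p) :=
  {w | ∃ d ∈ tangCone (Dmp (p := p) g) (Pmp φ G zb), w = DPmp φ G zb uv - d}

/-- The defining property of the set `Σ(vb, vsb)` of extreme points of `Λ̄(vb)`. -/
def SigmaOK (g : Euc m → Euc q) (yb ysb : Euc m) (Sig : Set (Euc q))
    (vb vsb : Euc m) : Prop :=
  Sig.Nonempty ∧ Sig ⊆ Set.extremePoints ℝ (LamDir g yb ysb vb) ∧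
  ∀ u ∈ critCone (KbarS g yb ysb) vb vsb,
    ∃ β₀ > (0:ℝ), ∀ β : ℝ, 0 < β → β < β₀ →
      (Sig ∩ LamDir g yb ysb (vb + β • u)).Nonempty

end MPEC

/-!
Near `z̄`, `Ω` is the translate `z̄ + K` of the closed cone `K = T_Ω(z̄)` obtained by keeping, in
each polyhedral piece through `z̄`, only the constraints active at `z̄`. The tangent cone of such
a finite union of polyhedral cones at `w` depends only on which pieces contain `w` and which
constraints are active there, so it takes finitely many values. Hence `⋃_{w ∈ K} N̂_K(w)` is a
finite union of closed cones, thus closed, and it contains every regular normal of `Ω` near `z̄`: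
this gives `⊆`. Conversely `N̂_K(w) = N̂_K(t • w)` for `t > 0`, which is the regular normal cone
of `Ω` at `z̄ + t • w → z̄`.
-/

open Topology

section TangentCone

variable {E : Type*} [AddCommGroup E] [Module ℝ E] [TopologicalSpace E]

lemma mem_tangCone_of_eventually {Ω : Set E} {z u : E} {t : ℕ → ℝ} {w : ℕ → E}
    (ht0 : ∀ k, 0 < t k) (ht : Tendsto t atTop (𝓝 0)) (hw : Tendsto w atTop (𝓝 u))
    (h : ∀ᶠ k in atTop, z + t k • w k ∈ Ω) : u ∈ tangCone Ω z := by
  obtain ⟨N, hN⟩ := eventually_atTop.1 h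
  exact ⟨fun k => t (k + N), fun k => w (k + N), fun k => ht0 _,
    ht.comp (tendsto_add_atTop_nat N), hw.comp (tendsto_add_atTop_nat N),
    fun k => hN _ (Nat.le_add_left N k)⟩

section ContinuousOperations

variable [IsTopologicalAddGroup E] [ContinuousSMul ℝ E]

lemma tendsto_add_smul_nhds (z : E) {u : E} {t : ℕ → ℝ} {w : ℕ → E}
    (ht : Tendsto t atTop (𝓝 0)) (hw : Tendsto w atTop (𝓝 u)) :
    Tendsto (fun k => z + t k • w k) atTop (𝓝 z) := by
  simpa using tendsto_const_nhds.add (ht.smul hw)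

lemma tangCone_mono_of_eventuallyLE {Ω Ω' : Set E} {z : E} (h : Ω ≤ᶠ[𝓝 z] Ω') :
    tangCone Ω z ⊆ tangCone Ω' z := by
  rintro u ⟨t, w, ht0, ht, hw, hmem⟩
  exact mem_tangCone_of_eventually ht0 ht hw
    (((tendsto_add_smul_nhds z ht hw).eventually h).mono fun k hk => hk (hmem k))

lemma tangCone_congr {Ω Ω' : Set E} {z : E} (h : Ω =ᶠ[𝓝 z] Ω') :
    tangCone Ω z = tangCone Ω' z :=
  (tangCone_mono_of_eventuallyLE h.le).antisymm (tangCone_mono_of_eventuallyLE h.symm.le)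

end ContinuousOperations

lemma tangCone_vadd (K : Set E) (v w : E) : tangCone (v +ᵥ K) (v + w) = tangCone K w := by
  have hmem : ∀ (s : ℝ) (x : E), v + w + s • x ∈ v +ᵥ K ↔ w + s • x ∈ K := fun s x => by
    rw [add_assoc, ← vadd_eq_add, vadd_mem_vadd_set_iff]
  ext u
  simp only [tangCone, hmem]

def IsPosCone (K : Set E) : Prop := ∀ ⦃c : ℝ⦄, 0 < c → ∀ ⦃u⦄, u ∈ K → c • u ∈ K

lemma IsPosCone.tangCone_smul_subset {K : Set E} (hK : IsPosCone K) {c : ℝ} (hc : 0 < c)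
    (w : E) : tangCone K (c • w) ⊆ tangCone K w := by
  rintro u ⟨t, x, ht0, ht, hx, hmem⟩
  refine ⟨fun k => c⁻¹ * t k, x, fun k => mul_pos (inv_pos.2 hc) (ht0 k), ?_, hx, fun k => ?_⟩
  · simpa using ht.const_mul c⁻¹
  · simpa [smul_add, smul_smul, hc.ne'] using hK (inv_pos.2 hc) (hmem k)

lemma IsPosCone.tangCone_smul {K : Set E} (hK : IsPosCone K) {c : ℝ} (hc : 0 < c) (w : E) :
    tangCone K (c • w) = tangCone K w := by
  refine (hK.tangCone_smul_subset hc w).antisymm ?_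
  simpa [hc.ne'] using hK.tangCone_smul_subset (inv_pos.2 hc) (c • w)

lemma IsPosCone.tangCone_zero {K : Set E} (hK : IsPosCone K) (hKc : IsClosed K) :
    tangCone K 0 = K := by
  ext u
  constructor
  · rintro ⟨t, w, ht0, -, hw, hmem⟩
    refine hKc.mem_of_tendsto hw (Eventually.of_forall fun k => ?_)
    simpa [(ht0 k).ne'] using hK (inv_pos.2 (ht0 k)) (hmem k)
  · intro hu
    refine ⟨fun k => 1 / ((k : ℝ) + 1), fun _ => u, fun k => by positivity,
      tendsto_one_div_add_atTop_nhds_zero_nat, tendsto_const_nhds, fun k => ?_⟩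
    simpa using hK (by positivity) hu

lemma tangCone_eq_of_eventuallyEq_vadd [IsTopologicalAddGroup E] [ContinuousSMul ℝ E]
    {Ω K : Set E} {z : E} (hΩ : Ω =ᶠ[𝓝 z] z +ᵥ K)
    (hK : IsPosCone K) (hKc : IsClosed K) : tangCone Ω z = K := by
  rw [tangCone_congr hΩ]
  simpa [hK.tangCone_zero hKc] using tangCone_vadd K z 0

end TangentCone

section Polyhedral

variable {E : Type*} [AddCommGroup E] [Module ℝ E] [TopologicalSpace E]
  {ι : Type*} {κ : ι → Type*} (a : ∀ i, κ i → E →L[ℝ] ℝ) (α : ∀ i, κ i → ℝ)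

def polyUnion : Set E := ⋃ i, {z | ∀ j, a i j z ≤ α i j}

def activeCone (z : E) : Set E :=
  ⋃ i, {u | (∀ j, a i j z ≤ α i j) ∧ ∀ j, a i j z = α i j → a i j u ≤ 0}

lemma isClosed_polyUnion [Finite ι] : IsClosed (polyUnion a α) := by
  refine isClosed_iUnion_of_finite fun i => ?_
  simp only [ofPred_forall]
  exact isClosed_iInter fun j => isClosed_le (a i j).continuous continuous_const

lemma isPosCone_polyUnion_zero : IsPosCone (polyUnion a 0) := by
  intro c hc u hu
  simp only [polyUnion, mem_iUnion, mem_ofPred_eq, Pi.zero_apply, map_smul, smul_eq_mul] at hu ⊢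
  obtain ⟨i, hi⟩ := hu
  exact ⟨i, fun j => mul_nonpos_of_nonneg_of_nonpos hc.le (hi j)⟩

lemma activeCone_eq_polyUnion (z : E) :
    activeCone a α z = polyUnion
      (fun (i : {i // ∀ j, a i j z ≤ α i j}) (j : {j // a i j z = α i j}) => a i j) 0 := by
  ext u
  simp [activeCone, polyUnion]

lemma eventually_apply_le_iff (f : E →L[ℝ] ℝ) (c : ℝ) (z : E) :
    ∀ᶠ y in 𝓝 z, f y ≤ c ↔ f z ≤ c ∧ (f z = c → f (y - z) ≤ 0) := by
  rcases lt_trichotomy (f z) c with h | h | h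
  · filter_upwards [(f.continuous.tendsto z).eventually_lt_const h] with y hy
    simp [hy.le, h.le, h.ne]
  · exact Eventually.of_forall fun y => by simp [h]
  · filter_upwards [(f.continuous.tendsto z).eventually_const_lt h] with y hy
    simp [hy.not_ge, h.not_ge]

lemma polyUnion_eventuallyEq_vadd_activeCone [Finite ι] [∀ i, Finite (κ i)] (z : E) :
    polyUnion a α =ᶠ[𝓝 z] z +ᵥ activeCone a α z := by
  refine eventuallyEq_set.2 ?_
  filter_upwards [eventually_all.2 fun i => eventually_all.2 fun j =>
    eventually_apply_le_iff (a i j) (α i j) z] with y hy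
  simp only [polyUnion, activeCone, mem_vadd_set_iff_neg_vadd_mem, vadd_eq_add, neg_add_eq_sub,
    mem_iUnion, mem_ofPred_eq]
  exact exists_congr fun i => (forall_congr' (hy i)).trans forall_and

lemma isClosed_activeCone [Finite ι] (z : E) : IsClosed (activeCone a α z) := by
  rw [activeCone_eq_polyUnion]
  exact isClosed_polyUnion _ _

lemma isPosCone_activeCone (z : E) : IsPosCone (activeCone a α z) := by
  rw [activeCone_eq_polyUnion]
  exact isPosCone_polyUnion_zero _

lemma tangCone_polyUnion [Finite ι] [∀ i, Finite (κ i)] [IsTopologicalAddGroup E]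
    [ContinuousSMul ℝ E] (z : E) : tangCone (polyUnion a α) z = activeCone a α z :=
  tangCone_eq_of_eventuallyEq_vadd (polyUnion_eventuallyEq_vadd_activeCone a α z)
    (isPosCone_activeCone a α z) (isClosed_activeCone a α z)

lemma finite_range_activeCone [Finite ι] [∀ i, Finite (κ i)] :
    (range (activeCone a α)).Finite := by
  let cone (p : (ι → Prop) × (∀ i, κ i → Prop)) : Set E :=
    ⋃ i, {u | p.1 i ∧ ∀ j, p.2 i j → a i j u ≤ 0}
  refine (finite_range cone).subset (range_subset_iff.2 fun z => ?_)
  exact ⟨(fun i => ∀ j, a i j z ≤ α i j, fun i j => a i j z = α i j), rfl⟩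

lemma finite_range_tangCone_activeCone [Finite ι] [∀ i, Finite (κ i)]
    [IsTopologicalAddGroup E] [ContinuousSMul ℝ E] (z : E) :
    (range (tangCone (activeCone a α z))).Finite := by
  rw [activeCone_eq_polyUnion, funext (tangCone_polyUnion _ _)]
  exact finite_range_activeCone _ _

end Polyhedral

section Normal

variable {E : Type*} [NormedAddCommGroup E] [InnerProductSpace ℝ E]

lemma isClosed_polarCone (S : Set E) : IsClosed (polarCone S) := by
  simp only [polarCone, ofPred_forall]
  exact isClosed_iInter fun u => isClosed_iInter fun _ =>
    isClosed_le (continuous_id.inner continuous_const) continuous_const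

lemma isClosed_biUnion_regNormal {K : Set E} (hfin : (range (tangCone K)).Finite) (s : Set E) :
    IsClosed (⋃ w ∈ s, regNormal K w) := by
  simp only [regNormal, ← biUnion_image (f := tangCone K) (g := polarCone)]
  exact (hfin.subset (image_subset_range _ _)).isClosed_biUnion fun T _ => isClosed_polarCone T

lemma regNormal_eq_of_eventuallyEq_vadd {Ω K : Set E} {y z : E} (h : Ω =ᶠ[𝓝 y] z +ᵥ K) :
    regNormal Ω y = regNormal K (y - z) := by
  rw [regNormal, regNormal, tangCone_congr h, ← tangCone_vadd K z (y - z), add_sub_cancel]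

lemma mem_limNormal_of_eventually {Ω : Set E} {z x : E} {zk xk : ℕ → E}
    (hz : Tendsto zk atTop (𝓝 z)) (hx : Tendsto xk atTop (𝓝 x))
    (h : ∀ᶠ k in atTop, zk k ∈ Ω ∧ xk k ∈ regNormal Ω (zk k)) : x ∈ limNormal Ω z := by
  obtain ⟨N, hN⟩ := eventually_atTop.1 h
  exact ⟨fun k => zk (k + N), fun k => xk (k + N), fun k => (hN _ (Nat.le_add_left N k)).1,
    hz.comp (tendsto_add_atTop_nat N), fun k => (hN _ (Nat.le_add_left N k)).2,
    hx.comp (tendsto_add_atTop_nat N)⟩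

theorem limNormal_eq_iUnion_regNormal_of_eventuallyEq_vadd {Ω K : Set E} {z : E}
    (hΩ : Ω =ᶠ[𝓝 z] z +ᵥ K) (hK : IsPosCone K) (hfin : (range (tangCone K)).Finite) :
    limNormal Ω z = ⋃ w ∈ K, regNormal K w := by
  ext x
  constructor
  · rintro ⟨zk, xk, hzΩ, hz, hxN, hx⟩
    refine (isClosed_biUnion_regNormal hfin K).mem_of_tendsto hx ?_
    filter_upwards [hz.eventually hΩ.eventuallyEq_nhds] with k hk
    have hzK : zk k ∈ z +ᵥ K := hk.mem_iff.self_of_nhds.1 (hzΩ k)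
    rw [mem_vadd_set_iff_neg_vadd_mem, vadd_eq_add, neg_add_eq_sub] at hzK
    exact mem_biUnion hzK (regNormal_eq_of_eventuallyEq_vadd hk ▸ hxN k)
  · simp only [mem_iUnion]
    rintro ⟨w, hw, hx⟩
    have ht : Tendsto (fun k : ℕ => 1 / ((k : ℝ) + 1)) atTop (𝓝 0) :=
      tendsto_one_div_add_atTop_nhds_zero_nat
    have hzk := tendsto_add_smul_nhds z ht (tendsto_const_nhds (x := w))
    refine mem_limNormal_of_eventually hzk tendsto_const_nhds ?_
    filter_upwards [hzk.eventually hΩ.eventuallyEq_nhds] with k hk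
    have htk : (0 : ℝ) < 1 / ((k : ℝ) + 1) := by positivity
    refine ⟨hk.mem_iff.self_of_nhds.2 (vadd_mem_vadd_set (hK htk hw)), ?_⟩
    rwa [regNormal_eq_of_eventuallyEq_vadd hk, add_sub_cancel_left, regNormal,
      hK.tangCone_smul htk]

end Normal

theorem limNormal_eq_iUnion_regNormal_tangCone_of_locallyPolyhedral_general
    {d : ℕ} (Ω : Set (Euc d)) (zb : Euc d)
    (hpoly : LocallyPolyhedralNear Ω zb) :
    limNormal Ω zb = ⋃ w ∈ tangCone Ω zb, regNormal (tangCone Ω zb) w := by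
  obtain ⟨W, hW, C, ⟨N, Cs, hCs, rfl⟩, hΩW⟩ := hpoly
  choose Nc a α hCs using hCs
  have hΩC : Ω =ᶠ[𝓝 zb] polyUnion a α := by
    refine eventuallyEq_set.2 ?_
    filter_upwards [hW] with y hy
    simpa [hy, polyUnion, hCs] using Set.ext_iff.1 hΩW y
  have hΩ := hΩC.trans (polyUnion_eventuallyEq_vadd_activeCone a α zb)
  rw [tangCone_eq_of_eventuallyEq_vadd hΩ (isPosCone_activeCone a α zb)
    (isClosed_activeCone a α zb)]
  exact limNormal_eq_iUnion_regNormal_of_eventuallyEq_vadd hΩ (isPosCone_activeCone a α zb)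
    (finite_range_tangCone_activeCone a α zb)

/-- **Lemma 2.3.** If `Ω` is locally polyhedral near `z̄ ∈ Ω`, then the limiting normal cone
equals the union of the regular normal cones to the tangent cone at its points. -/
theorem limNormal_eq_iUnion_regNormal_tangCone_of_locallyPolyhedral
    {d : ℕ} (Ω : Set (Euc d)) (zb : Euc d) (hzb : zb ∈ Ω)
    (hpoly : LocallyPolyhedralNear Ω zb) :
    limNormal Ω zb = ⋃ w ∈ tangCone Ω zb, regNormal (tangCone Ω zb) w :=
  limNormal_eq_iUnion_regNormal_tangCone_of_locallyPolyhedral_general Ω zb hpoly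
end
end

section
/- Characterization of the span of the directional multiplier set. Let v̄ ∈ K̄_Γ and assume Λ̄(v̄) ≠ ∅. Then (Λ̄(v̄))^+ = {μ ∈ ℝ^q : ∇g(ȳ)ᵀμ = 0, v̄ᵀ∇²(μᵀg)(ȳ)v̄ = 0, and μ_i = 0 for all i ∉ J̄⁺(Λ̄(v̄))}. -/
open Set Filter Metric Pointwise
open scoped RealInnerProductSpace

noncomputable section

/-- **Characterization of the span of the directional multiplier set.** -/
theorem plusSpan_LamDir_eq
    {m q : ℕ} (g : Euc m → Euc q) (hg : ContDiff ℝ 2 g)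
    (yb ysb : Euc m) (hyb : yb ∈ Gam g)
    (vb : Euc m) (hvb : vb ∈ KbarS g yb ysb)
    (hne : (LamDir g yb ysb vb).Nonempty) :
    plusSpan (LamDir g yb ysb vb)
      = {μ : Euc q | ∑ i, μ i • gradg g yb i = 0 ∧
          ⟪vb, hessLam g yb μ vb⟫ = 0 ∧
          ∀ i ∉ JplusSet g yb (LamDir g yb ysb vb), μ i = 0} := by
  classical
  obtain ⟨lam0, hlam0⟩ := hne
  set S := LamDir g yb ysb vb with hSdef
  -- the quadratic form as a linear function of the multiplier
  have hQ : ∀ lam : Euc q, ⟪vb, hessLam g yb lam vb⟫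
      = ∑ i, lam i * ⟪vb, hessg g yb i vb⟫ := by
    intro lam
    simp only [hessLam, inner_sum, real_inner_smul_right]
  -- all elements of S have the same quadratic value
  have hQeq : ∀ a ∈ S, (∑ i, a i * ⟪vb, hessg g yb i vb⟫)
      = ∑ i, lam0 i * ⟪vb, hessg g yb i vb⟫ := by
    intro a ha
    have h1 := ha.2 lam0 hlam0.1
    have h2 := hlam0.2 a ha.1
    rw [hQ, hQ] at h1 h2
    exact le_antisymm h2 h1
  -- elements of S vanish outside J
  have hJ : ∀ lam ∈ S, ∀ i, i ∉ JplusSet g yb S → lam i = 0 := by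
    intro lam hlam i hi
    by_contra h
    have hpos : 0 < lam i := lt_of_le_of_ne (hlam.1.1 i) (Ne.symm h)
    have hgi : g yb i = 0 := by
      rcases lt_or_eq_of_le (hyb i) with h' | h'
      · exact absurd (hlam.1.2.1 i h') (ne_of_gt hpos)
      · exact h'
    exact hi (Set.mem_iUnion₂.mpr ⟨lam, hlam, hgi, hpos⟩)
  apply Set.Subset.antisymm
  · -- forward inclusion
    intro x hx
    induction hx using Submodule.span_induction with
    | mem x hxmem =>
        obtain ⟨a, ha, b, hb, rfl⟩ := Set.mem_sub.mp hxmem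
        refine ⟨?_, ?_, ?_⟩
        · have hcongr : ∀ i ∈ Finset.univ, (a - b) i • gradg g yb i
              = a i • gradg g yb i - b i • gradg g yb i := by
            intro i _
            rw [PiLp.sub_apply, sub_smul]
          rw [Finset.sum_congr rfl hcongr, Finset.sum_sub_distrib,
            ha.1.2.2, hb.1.2.2, sub_self]
        · rw [hQ]
          have hcongr : ∀ i ∈ Finset.univ, (a - b) i * ⟪vb, hessg g yb i vb⟫
              = a i * ⟪vb, hessg g yb i vb⟫ - b i * ⟪vb, hessg g yb i vb⟫ := by
            intro i _
            rw [PiLp.sub_apply, sub_mul]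
          rw [Finset.sum_congr rfl hcongr, Finset.sum_sub_distrib,
            hQeq a ha, hQeq b hb, sub_self]
        · intro i hi
          rw [PiLp.sub_apply, hJ a ha i hi, hJ b hb i hi, sub_self]
    | zero =>
        refine ⟨?_, ?_, fun i _ => rfl⟩
        · simp
        · rw [hQ]; simp
    | add x y hx hy px py =>
        obtain ⟨px1, px2, px3⟩ := px
        obtain ⟨py1, py2, py3⟩ := py
        refine ⟨?_, ?_, ?_⟩
        · have hcongr : ∀ i ∈ Finset.univ, (x + y) i • gradg g yb i
              = x i • gradg g yb i + y i • gradg g yb i := by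
            intro i _
            rw [PiLp.add_apply, add_smul]
          rw [Finset.sum_congr rfl hcongr, Finset.sum_add_distrib, px1, py1, add_zero]
        · rw [hQ] at px2 py2 ⊢
          have hcongr : ∀ i ∈ Finset.univ, (x + y) i * ⟪vb, hessg g yb i vb⟫
              = x i * ⟪vb, hessg g yb i vb⟫ + y i * ⟪vb, hessg g yb i vb⟫ := by
            intro i _
            rw [PiLp.add_apply, add_mul]
          rw [Finset.sum_congr rfl hcongr, Finset.sum_add_distrib, px2, py2, add_zero]
        · intro i hi
          rw [PiLp.add_apply, px3 i hi, py3 i hi, add_zero]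
    | smul a x hx px =>
        obtain ⟨px1, px2, px3⟩ := px
        refine ⟨?_, ?_, ?_⟩
        · have hcongr : ∀ i ∈ Finset.univ, (a • x) i • gradg g yb i
              = a • (x i • gradg g yb i) := by
            intro i _
            rw [PiLp.smul_apply, smul_eq_mul, mul_smul]
          rw [Finset.sum_congr rfl hcongr, ← Finset.smul_sum, px1, smul_zero]
        · rw [hQ] at px2 ⊢
          have hcongr : ∀ i ∈ Finset.univ, (a • x) i * ⟪vb, hessg g yb i vb⟫
              = a * (x i * ⟪vb, hessg g yb i vb⟫) := by
            intro i _
            rw [PiLp.smul_apply, smul_eq_mul, mul_assoc]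
          rw [Finset.sum_congr rfl hcongr, ← Finset.mul_sum, px2, mul_zero]
        · intro i hi
          rw [PiLp.smul_apply, px3 i hi, smul_zero]
  · -- reverse inclusion
    rintro μ ⟨hA, hQ0, hsupp⟩
    rw [hQ] at hQ0
    show μ ∈ Submodule.span ℝ (S - S)
    by_cases hμ : μ = 0
    · subst hμ; exact Submodule.zero_mem _
    set F : Finset (Fin q) := Finset.univ.filter (fun i => μ i ≠ 0) with hF
    have hFne : F.Nonempty := by
      by_contra hFe
      apply hμ
      have : ∀ i, μ i = 0 := by
        intro i
        by_contra hne'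
        exact hFe ⟨i, Finset.mem_filter.mpr ⟨Finset.mem_univ i, hne'⟩⟩
      exact PiLp.ext this
    -- choose multipliers positive on the support of μ
    have hchoice : ∀ i ∈ F, ∃ lam, lam ∈ S ∧ g yb i = 0 ∧ 0 < lam i := by
      intro i hiF
      have hiJ : i ∈ JplusSet g yb S := by
        by_contra h
        exact (Finset.mem_filter.mp hiF).2 (hsupp i h)
      obtain ⟨lam, hlam, hgi, hpos⟩ := Set.mem_iUnion₂.mp hiJ
      exact ⟨lam, hlam, hgi, hpos⟩
    choose! lamf hlamfS hgf hlamfpos using hchoice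
    set N : ℝ := (F.card : ℝ) with hNdef
    have hN : 0 < N := by
      simp only [hNdef, Nat.cast_pos, Finset.card_pos]
      exact hFne
    set lamhat : Euc q := N⁻¹ • ∑ i ∈ F, lamf i with hlamhat
    have hhat_apply : ∀ j, lamhat j = N⁻¹ * ∑ i ∈ F, lamf i j := by
      intro j
      rw [hlamhat, PiLp.smul_apply, WithLp.ofLp_sum, Finset.sum_apply, smul_eq_mul]
    -- lamhat ∈ S
    have hhat_nonneg : ∀ j, 0 ≤ lamhat j := by
      intro j
      rw [hhat_apply]
      exact mul_nonneg (inv_nonneg.mpr hN.le)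
        (Finset.sum_nonneg fun i hi => (hlamfS i hi).1.1 j)
    have hhat_compl : ∀ j, g yb j < 0 → lamhat j = 0 := by
      intro j hj
      rw [hhat_apply]
      rw [Finset.sum_congr rfl fun i hi => (hlamfS i hi).1.2.1 j hj]
      simp
    have hhat_grad : ∑ j, lamhat j • gradg g yb j = ysb := by
      calc ∑ j, lamhat j • gradg g yb j
          = ∑ j, N⁻¹ • ∑ i ∈ F, lamf i j • gradg g yb j := by
            refine Finset.sum_congr rfl fun j _ => ?_
            rw [hhat_apply, mul_smul, Finset.sum_smul]
        _ = N⁻¹ • ∑ j, ∑ i ∈ F, lamf i j • gradg g yb j := (Finset.smul_sum).symm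
        _ = N⁻¹ • ∑ i ∈ F, ∑ j, lamf i j • gradg g yb j := by
            rw [Finset.sum_comm]
        _ = N⁻¹ • ∑ _i ∈ F, ysb := by
            rw [Finset.sum_congr rfl fun i hi => (hlamfS i hi).1.2.2]
        _ = ysb := by
            rw [Finset.sum_const, ← Nat.cast_smul_eq_nsmul ℝ, smul_smul,
              inv_mul_cancel₀ hN.ne', one_smul]
    have hhat_Q : (∑ j, lamhat j * ⟪vb, hessg g yb j vb⟫)
        = ∑ j, lam0 j * ⟪vb, hessg g yb j vb⟫ := by
      calc ∑ j, lamhat j * ⟪vb, hessg g yb j vb⟫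
          = ∑ j, N⁻¹ * ∑ i ∈ F, lamf i j * ⟪vb, hessg g yb j vb⟫ := by
            refine Finset.sum_congr rfl fun j _ => ?_
            rw [hhat_apply, mul_assoc, Finset.sum_mul]
        _ = N⁻¹ * ∑ j, ∑ i ∈ F, lamf i j * ⟪vb, hessg g yb j vb⟫ :=
            (Finset.mul_sum _ _ _).symm
        _ = N⁻¹ * ∑ i ∈ F, ∑ j, lamf i j * ⟪vb, hessg g yb j vb⟫ := by
            rw [Finset.sum_comm]
        _ = N⁻¹ * ∑ i ∈ F, ∑ j, lam0 j * ⟪vb, hessg g yb j vb⟫ := by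
            rw [Finset.sum_congr rfl fun i hi => hQeq (lamf i) (hlamfS i hi)]
        _ = ∑ j, lam0 j * ⟪vb, hessg g yb j vb⟫ := by
            rw [Finset.sum_const, nsmul_eq_mul, ← mul_assoc,
              inv_mul_cancel₀ hN.ne', one_mul]
    have hhatS : lamhat ∈ S := by
      refine ⟨⟨hhat_nonneg, hhat_compl, hhat_grad⟩, fun ν hν => ?_⟩
      have h1 := hlam0.2 ν hν
      rw [hQ, hQ] at h1 ⊢
      rw [hhat_Q]
      exact h1.trans (le_of_eq (hQeq lam0 hlam0).symm)
    have hhat_pos : ∀ i ∈ F, 0 < lamhat i := by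
      intro i hi
      rw [hhat_apply]
      refine mul_pos (inv_pos.mpr hN) ?_
      refine Finset.sum_pos' (fun j hj => (hlamfS j hj).1.1 i) ⟨i, hi, hlamfpos i hi⟩
    -- the step size
    set t : ℝ := F.inf' hFne (fun i => lamhat i / (2 * |μ i|)) with htdef
    have habs : ∀ i ∈ F, 0 < |μ i| := by
      intro i hi
      exact abs_pos.mpr (Finset.mem_filter.mp hi).2
    have ht0 : 0 < t := by
      rw [htdef, Finset.lt_inf'_iff]
      intro i hi
      exact div_pos (hhat_pos i hi)
        (mul_pos two_pos (habs i hi))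
    set lamplus : Euc q := lamhat + t • μ with hlamplus
    have hplus_apply : ∀ j, lamplus j = lamhat j + t * μ j := by
      intro j
      rw [hlamplus, PiLp.add_apply, PiLp.smul_apply (c := t) (x := μ), smul_eq_mul]
    have hplus_nonneg : ∀ j, 0 ≤ lamplus j := by
      intro j
      rw [hplus_apply]
      by_cases hjF : j ∈ F
      · have hle : t ≤ lamhat j / (2 * |μ j|) := Finset.inf'_le _ hjF
        have h2 : t * (2 * |μ j|) ≤ lamhat j :=
          (le_div_iff₀ (mul_pos two_pos (habs j hjF))).mp hle
        have h3 : t * (-|μ j|) ≤ t * μ j :=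
          mul_le_mul_of_nonneg_left (neg_abs_le (μ j)) ht0.le
        nlinarith [h2, h3, hhat_nonneg j]
      · have : μ j = 0 := by
          by_contra h
          exact hjF (Finset.mem_filter.mpr ⟨Finset.mem_univ j, h⟩)
        rw [this, mul_zero, add_zero]
        exact hhat_nonneg j
    have hsupp0 : ∀ j, g yb j < 0 → μ j = 0 := by
      intro j hj
      refine hsupp j fun hjJ => ?_
      obtain ⟨lam, _, hgj, _⟩ := Set.mem_iUnion₂.mp hjJ
      exact absurd hgj (ne_of_lt hj)
    have hplus_compl : ∀ j, g yb j < 0 → lamplus j = 0 := by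
      intro j hj
      rw [hplus_apply, hhat_compl j hj, hsupp0 j hj, mul_zero, add_zero]
    have hplus_grad : ∑ j, lamplus j • gradg g yb j = ysb := by
      calc ∑ j, lamplus j • gradg g yb j
          = ∑ j, (lamhat j • gradg g yb j + t • (μ j • gradg g yb j)) := by
            refine Finset.sum_congr rfl fun j _ => ?_
            rw [hplus_apply, add_smul, mul_smul]
        _ = ysb := by
            rw [Finset.sum_add_distrib, hhat_grad, ← Finset.smul_sum, hA,
              smul_zero, add_zero]
    have hplus_Q : (∑ j, lamplus j * ⟪vb, hessg g yb j vb⟫)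
        = ∑ j, lamhat j * ⟪vb, hessg g yb j vb⟫ := by
      calc ∑ j, lamplus j * ⟪vb, hessg g yb j vb⟫
          = ∑ j, (lamhat j * ⟪vb, hessg g yb j vb⟫
              + t * (μ j * ⟪vb, hessg g yb j vb⟫)) := by
            refine Finset.sum_congr rfl fun j _ => ?_
            rw [hplus_apply, add_mul, mul_assoc]
        _ = _ := by
            rw [Finset.sum_add_distrib, ← Finset.mul_sum, hQ0, mul_zero, add_zero]
    have hplusS : lamplus ∈ S := by
      refine ⟨⟨hplus_nonneg, hplus_compl, hplus_grad⟩, fun ν hν => ?_⟩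
      have h1 := hhatS.2 ν hν
      rw [hQ, hQ] at h1 ⊢
      rw [hplus_Q]
      exact h1
    -- conclude
    have hmem : lamplus - lamhat ∈ Submodule.span ℝ (S - S) :=
      Submodule.subset_span (Set.sub_mem_sub hplusS hhatS)
    have hdiff : lamplus - lamhat = t • μ := by
      rw [hlamplus, add_sub_cancel_left]
    have := Submodule.smul_mem (Submodule.span ℝ (S - S)) t⁻¹ hmem
    rw [hdiff, smul_smul, inv_mul_cancel₀ ht0.ne', one_smul] at this
    exact this
end
end

section
/- Index-set characterization of 2-nondegeneracy. Let v̄ ∈ K̄_Γ with Λ̄(v̄) ≠ ∅, and let Ĵ be an index set with J̄⁺(Λ̄(v̄)) ⊆ Ĵ ⊆ Ī(v̄) such that for every j ∈ Ī(v̄)∖Ĵ the gradient ∇g_j(ȳ) lies in span{∇g_i(ȳ) : i ∈ Ĵ}. Then g is 2-nondegenerate in direction v̄ at (ȳ,ȳ*) if and only if the following implication holds: whenever Σ_{i∈Ĵ} η_i∇g_i(ȳ) + Σ_{i∈J̄⁺(Λ̄(v̄))} μ_i∇²g_i(ȳ)v̄ = 0 and Σ_{i∈J̄⁺(Λ̄(v̄))}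 μ_i∇g_i(ȳ) = 0, then μ_i = 0 for all i ∈ J̄⁺(Λ̄(v̄)). -/
open Set Filter Metric Pointwise
open scoped RealInnerProductSpace

noncomputable section

section TwoNondegAux

variable {m q : ℕ} (g : Euc m → Euc q) (yb ysb vb : Euc m)

lemma hessLam_add (l1 l2 : Euc q) (v : Euc m) :
    hessLam g yb (l1 + l2) v = hessLam g yb l1 v + hessLam g yb l2 v := by
  simp [hessLam, PiLp.add_apply, add_smul, Finset.sum_add_distrib]

lemma hessLam_smulc (a : ℝ) (l : Euc q) (v : Euc m) :
    hessLam g yb (a • l) v = a • hessLam g yb l v := by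
  simp [hessLam, PiLp.smul_apply, smul_smul, Finset.smul_sum]

lemma lamS_convex : Convex ℝ (LamS g yb ysb) := by
  intro x hx y hy a b ha hb hab
  obtain ⟨hx1, hx2, hx3⟩ := hx
  obtain ⟨hy1, hy2, hy3⟩ := hy
  refine ⟨fun i => ?_, fun i hi => ?_, ?_⟩
  · simp only [PiLp.add_apply, PiLp.smul_apply, smul_eq_mul]
    exact add_nonneg (mul_nonneg ha (hx1 i)) (mul_nonneg hb (hy1 i))
  · simp [PiLp.add_apply, PiLp.smul_apply, hx2 i hi, hy2 i hi]
  · have h : ∑ i, ((a • x + b • y) i) • gradg g yb i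
        = a • ∑ i, x i • gradg g yb i + b • ∑ i, y i • gradg g yb i := by
      simp [PiLp.add_apply, PiLp.smul_apply, add_smul, smul_smul,
        Finset.sum_add_distrib, Finset.smul_sum]
    rw [h, hx3, hy3, ← add_smul, hab, one_smul]

lemma lamDir_convex : Convex ℝ (LamDir g yb ysb vb) := by
  intro x hx y hy a b ha hb hab
  obtain ⟨hxS, hxM⟩ := hx
  obtain ⟨hyS, hyM⟩ := hy
  refine ⟨lamS_convex g yb ysb hxS hyS ha hb hab, fun mu hmu => ?_⟩
  have hx' := hxM mu hmu
  have hy' := hyM mu hmu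
  have hcomb : ⟪vb, hessLam g yb (a • x + b • y) vb⟫
      = a * ⟪vb, hessLam g yb x vb⟫ + b * ⟪vb, hessLam g yb y vb⟫ := by
    rw [hessLam_add, hessLam_smulc, hessLam_smulc, inner_add_right,
      real_inner_smul_right, real_inner_smul_right]
  rw [hcomb]
  have h1 : ⟪vb, hessLam g yb mu vb⟫
      = a * ⟪vb, hessLam g yb mu vb⟫ + b * ⟪vb, hessLam g yb mu vb⟫ := by
    rw [← add_mul, hab, one_mul]
  linarith [mul_le_mul_of_nonneg_left hx' ha, mul_le_mul_of_nonneg_left hy' hb]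

lemma mem_Jplus (hyb : yb ∈ Gam g) {lam : Euc q} (hlam : lam ∈ LamDir g yb ysb vb)
    {i : Fin q} (hi : lam i ≠ 0) : i ∈ JplusSet g yb (LamDir g yb ysb vb) := by
  have hpos : 0 < lam i := lt_of_le_of_ne (hlam.1.1 i) (Ne.symm hi)
  have hg0 : g yb i = 0 := by
    by_contra h
    exact hi (hlam.1.2.1 i (lt_of_le_of_ne (hyb i) h))
  exact Set.mem_biUnion hlam ⟨hg0, hpos⟩

lemma g_eq_zero_of_mem_Jplus {i : Fin q}
    (hi : i ∈ JplusSet g yb (LamDir g yb ysb vb)) : g yb i = 0 := by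
  obtain ⟨_, ⟨l, rfl⟩, hmem⟩ := hi
  obtain ⟨_, ⟨hl, rfl⟩, hm⟩ := hmem
  exact hm.1

/-- The subspace of multipliers supported on `J` with vanishing gradient combination. -/
def Vsub (g : Euc m → Euc q) (yb : Euc m) (J : Set (Fin q)) : Submodule ℝ (Euc q) where
  carrier := {μ | (∀ i ∉ J, μ i = 0) ∧ (∑ i, μ i • gradg g yb i) = 0}
  add_mem' := by
    rintro a b ⟨ha1, ha2⟩ ⟨hb1, hb2⟩
    refine ⟨fun i hi => by simp [PiLp.add_apply, ha1 i hi, hb1 i hi], ?_⟩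
    simp [PiLp.add_apply, add_smul, Finset.sum_add_distrib, ha2, hb2]
  zero_mem' := ⟨fun i _ => rfl, by simp⟩
  smul_mem' := by
    rintro c a ⟨ha1, ha2⟩
    refine ⟨fun i hi => by simp [PiLp.smul_apply, ha1 i hi], ?_⟩
    simp only [PiLp.smul_apply, smul_eq_mul]
    simp_rw [mul_smul, ← Finset.smul_sum, ha2, smul_zero]

lemma plusSpan_lamDir_subset (hyb : yb ∈ Gam g) :
    plusSpan (LamDir g yb ysb vb)
      ⊆ ↑(Vsub g yb (JplusSet g yb (LamDir g yb ysb vb))) := by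
  intro x hx
  have hle : Submodule.span ℝ (LamDir g yb ysb vb - LamDir g yb ysb vb)
      ≤ Vsub g yb (JplusSet g yb (LamDir g yb ysb vb)) := by
    rw [Submodule.span_le]
    rintro z ⟨u, hu, w, hw, rfl⟩
    constructor
    · intro i hi
      have hu0 : u i = 0 := by
        by_contra h; exact hi (mem_Jplus g yb ysb vb hyb hu h)
      have hw0 : w i = 0 := by
        by_contra h; exact hi (mem_Jplus g yb ysb vb hyb hw h)
      simp [PiLp.sub_apply, hu0, hw0]
    · simp [PiLp.sub_apply, sub_smul, Finset.sum_sub_distrib, hu.1.2.2, hw.1.2.2]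
  exact hle hx

lemma mem_plusSpan_lamDir (hyb : yb ∈ Gam g)
    (hne : (LamDir g yb ysb vb).Nonempty) (μ : Euc q)
    (hsupp : ∀ i ∉ JplusSet g yb (LamDir g yb ysb vb), μ i = 0)
    (hsum : (∑ i, μ i • gradg g yb i) = 0) :
    μ ∈ plusSpan (LamDir g yb ysb vb) := by
  classical
  by_cases hμ : μ = 0
  · subst hμ
    exact (Submodule.span ℝ _).zero_mem
  set Λd := LamDir g yb ysb vb with hΛd
  set J := JplusSet g yb Λd with hJ
  -- choose for each index a multiplier, positive at i when μ i ≠ 0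
  have hall : ∀ i : Fin q, ∃ l, l ∈ Λd ∧ (μ i ≠ 0 → 0 < l i) := by
    intro i
    by_cases h : μ i = 0
    · exact ⟨hne.choose, hne.choose_spec, fun h' => absurd h h'⟩
    · have hiJ : i ∈ J := by
        by_contra hiJ; exact h (hsupp i hiJ)
      obtain ⟨_, ⟨l, rfl⟩, hmem⟩ := hiJ
      obtain ⟨_, ⟨hl, rfl⟩, hm⟩ := hmem
      exact ⟨l, hl, fun _ => hm.2⟩
  choose lamf hlamf hlampos using hall
  set T : Finset (Fin q) := Finset.univ.filter (fun i => μ i ≠ 0) with hT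
  have hTne : T.Nonempty := by
    have hex : ∃ i, μ i ≠ 0 := by
      by_contra h
      push_neg at h
      exact hμ (PiLp.ext (fun i => by simp [h i]))
    rcases hex with ⟨i, hi⟩
    exact ⟨i, by simp [hT, hi]⟩
  have hcard : (0:ℝ) < (T.card : ℝ) := by
    exact_mod_cast Nat.pos_of_ne_zero (fun h => hTne.ne_empty (Finset.card_eq_zero.1 h))
  set c : ℝ := (T.card : ℝ)⁻¹ with hc
  have hcpos : 0 < c := inv_pos.2 hcard
  set lamhat : Euc q := ∑ i ∈ T, c • lamf i with hlamhat
  have hhat : lamhat ∈ Λd := by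
    refine Convex.sum_mem (lamDir_convex g yb ysb vb) (fun i _ => le_of_lt hcpos) ?_
      (fun i _ => hlamf i)
    rw [Finset.sum_const, nsmul_eq_mul, hc, mul_inv_cancel₀ (ne_of_gt hcard)]
  have hhatpos : ∀ i ∈ T, 0 < lamhat i := by
    intro j hj
    have happ : lamhat j = ∑ i ∈ T, (c • lamf i) j := by simp [hlamhat]
    rw [happ]
    refine Finset.sum_pos' (fun i _ => ?_) ⟨j, hj, ?_⟩
    · simp only [PiLp.smul_apply, smul_eq_mul]
      exact mul_nonneg (le_of_lt hcpos) ((hlamf i).1.1 j)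
    · simp only [PiLp.smul_apply, smul_eq_mul]
      exact mul_pos hcpos (hlampos j ((Finset.mem_filter.1 hj).2))
  have hhatnn : ∀ i, 0 ≤ lamhat i := hhat.1.1
  -- choose the perturbation size
  set t : ℝ := T.inf' hTne (fun i => lamhat i / (|μ i| + 1)) with ht
  have htpos : 0 < t := by
    rw [ht, Finset.lt_inf'_iff]
    intro i hi
    exact div_pos (hhatpos i hi) (by positivity)
  have hbound : ∀ i, 0 ≤ lamhat i + t * μ i ∧ 0 ≤ lamhat i - t * μ i := by
    intro i
    by_cases h : μ i = 0
    · simp [h, hhatnn i]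
    · have hiT : i ∈ T := by simp [hT, h]
      have h1 : t ≤ lamhat i / (|μ i| + 1) := Finset.inf'_le _ hiT
      have h2 : t * (|μ i| + 1) ≤ lamhat i := by
        rw [← le_div_iff₀ (by positivity)]; exact h1
      have h3 : |μ i| ≤ |μ i| + 1 := by linarith
      constructor <;>
        nlinarith [abs_nonneg (μ i), le_abs_self (μ i), neg_abs_le (μ i), le_of_lt htpos]
  have hnotJ : ∀ i, g yb i < 0 → i ∉ J := by
    intro i hgi hiJ
    exact absurd (g_eq_zero_of_mem_Jplus g yb ysb vb hiJ) (ne_of_lt hgi)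
  -- λ̂ ± tμ belong to LamS
  have hmemS : ∀ s : ℝ, (∀ i, 0 ≤ lamhat i + s * μ i) →
      lamhat + s • μ ∈ LamS g yb ysb := by
    intro s hs
    refine ⟨fun i => by simpa [PiLp.add_apply, PiLp.smul_apply] using hs i,
      fun i hi => ?_, ?_⟩
    · have hμ0 : μ i = 0 := hsupp i (hnotJ i hi)
      simp [PiLp.add_apply, PiLp.smul_apply, hμ0, hhat.1.2.1 i hi]
    · have : ∑ i, ((lamhat + s • μ) i) • gradg g yb i
          = (∑ i, lamhat i • gradg g yb i) + s • ∑ i, μ i • gradg g yb i := by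
        simp [PiLp.add_apply, PiLp.smul_apply, add_smul, smul_smul, Finset.smul_sum,
          Finset.sum_add_distrib]
      rw [this, hhat.1.2.2, hsum, smul_zero, add_zero]
  have hplusS : lamhat + t • μ ∈ LamS g yb ysb :=
    hmemS t (fun i => (hbound i).1)
  have hminusS : lamhat + (-t) • μ ∈ LamS g yb ysb := by
    refine hmemS (-t) (fun i => ?_)
    have := (hbound i).2; linarith [this]
  -- linearity of the quadratic objective
  have hlin : ∀ s : ℝ, ⟪vb, hessLam g yb (lamhat + s • μ) vb⟫
      = ⟪vb, hessLam g yb lamhat vb⟫ + s * ⟪vb, hessLam g yb μ vb⟫ := by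
    intro s
    rw [hessLam_add, hessLam_smulc, inner_add_right, real_inner_smul_right]
  have hub1 := hhat.2 _ hplusS
  have hub2 := hhat.2 _ hminusS
  rw [hlin t] at hub1
  rw [hlin (-t)] at hub2
  have hzero : ⟪vb, hessLam g yb μ vb⟫ = 0 := by nlinarith
  have hplusD : lamhat + t • μ ∈ Λd := by
    refine ⟨hplusS, fun mu hmu => ?_⟩
    rw [hlin t, hzero, mul_zero, add_zero]
    exact hhat.2 mu hmu
  have : μ = t⁻¹ • ((lamhat + t • μ) - lamhat) := by
    rw [add_sub_cancel_left, smul_smul, inv_mul_cancel₀ (ne_of_gt htpos), one_smul]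
  rw [this]
  exact Submodule.smul_mem _ _
    (Submodule.subset_span (Set.sub_mem_sub hplusD hhat))

lemma grad_mem_normal {i : Fin q} (hi : i ∈ IbarV g yb vb) :
    gradg g yb i ∈ cvxNormal (KbarS g yb ysb) vb := by
  intro y hy
  rw [inner_sub_right, hi.2, sub_zero]
  exact hy.1 i hi.1

lemma zero_mem_normal : (0 : Euc m) ∈ cvxNormal (KbarS g yb ysb) vb := by
  intro y _
  simp

lemma normal_subset_span (hvb : vb ∈ KbarS g yb ysb) :
    cvxNormal (KbarS g yb ysb) vb ⊆
      ↑(Submodule.span ℝ (insert ysb ((fun i => gradg g yb i) '' IbarV g yb vb))) := by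
  intro x hx
  set W := Submodule.span ℝ (insert ysb ((fun i => gradg g yb i) '' IbarV g yb vb))
    with hW
  set xp : Euc m := x - (W.orthogonalProjectionOnto x : Euc m) with hxp
  have hxpW : xp ∈ Wᗮ := Submodule.sub_starProjection_mem_orthogonal (K := W) x
  have hysb : ⟪ysb, xp⟫ = 0 :=
    (Submodule.mem_orthogonal W xp).1 hxpW ysb
      (Submodule.subset_span (Set.mem_insert _ _))
  have hgrads : ∀ i ∈ IbarV g yb vb, ⟪gradg g yb i, xp⟫ = 0 := by
    intro i hi
    exact (Submodule.mem_orthogonal W xp).1 hxpW _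
      (Submodule.subset_span (Set.mem_insert_of_mem _ (Set.mem_image_of_mem _ hi)))
  have key : ∀ i : Fin q, ∀ᶠ t : ℝ in nhdsWithin 0 (Set.Ioi 0),
      (g yb i = 0 → ⟪gradg g yb i, vb + t • xp⟫ ≤ 0) := by
    intro i
    by_cases hgi : g yb i = 0
    · by_cases hzi : ⟪gradg g yb i, vb⟫ = 0
      · have hgi2 : ⟪gradg g yb i, xp⟫ = 0 := hgrads i ⟨hgi, hzi⟩
        filter_upwards with t
        intro _
        rw [inner_add_right, real_inner_smul_right, hzi, hgi2, mul_zero, add_zero]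
      · have hlt : ⟪gradg g yb i, vb⟫ < 0 := lt_of_le_of_ne (hvb.1 i hgi) hzi
        have hcont : Filter.Tendsto
            (fun t : ℝ => ⟪gradg g yb i, vb⟫ + t * ⟪gradg g yb i, xp⟫)
            (nhds 0) (nhds ⟪gradg g yb i, vb⟫) := by
          have hc : Continuous fun t : ℝ =>
              ⟪gradg g yb i, vb⟫ + t * ⟪gradg g yb i, xp⟫ := by continuity
          simpa using hc.tendsto 0
        have hev : ∀ᶠ t : ℝ in nhds 0,
            ⟪gradg g yb i, vb⟫ + t * ⟪gradg g yb i, xp⟫ < 0 :=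
          hcont.eventually_lt_const hlt
        filter_upwards [hev.filter_mono nhdsWithin_le_nhds] with t htv
        intro _
        rw [inner_add_right, real_inner_smul_right]
        exact le_of_lt htv
    · filter_upwards with t
      intro h
      exact absurd h hgi
  have hex : ∃ t : ℝ, 0 < t ∧
      ∀ i : Fin q, g yb i = 0 → ⟪gradg g yb i, vb + t • xp⟫ ≤ 0 := by
    have h1 : ∀ᶠ t : ℝ in nhdsWithin 0 (Set.Ioi 0),
        ∀ i : Fin q, g yb i = 0 → ⟪gradg g yb i, vb + t • xp⟫ ≤ 0 :=
      Filter.eventually_all.2 key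
    have h2 : ∀ᶠ t : ℝ in nhdsWithin 0 (Set.Ioi 0), (0:ℝ) < t :=
      eventually_mem_nhdsWithin
    exact (h2.and h1).exists
  obtain ⟨t, htpos, hcond⟩ := hex
  have hKb : vb + t • xp ∈ KbarS g yb ysb := by
    refine ⟨hcond, ?_⟩
    rw [inner_add_right, real_inner_smul_right, hvb.2, hysb, mul_zero, add_zero]
  have hineq := hx _ hKb
  rw [add_sub_cancel_left, real_inner_smul_right] at hineq
  have hxxp : ⟪x, xp⟫ ≤ 0 := by
    by_contra h
    push_neg at h
    nlinarith
  have hproj : ⟪(W.orthogonalProjectionOnto x : Euc m), xp⟫ = 0 :=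
    (Submodule.mem_orthogonal W xp).1 hxpW _ (SetLike.coe_mem _)
  have hxpxp : ⟪xp, xp⟫ ≤ 0 := by
    have hx2 : x = xp + (W.orthogonalProjectionOnto x : Euc m) := by
      rw [hxp, sub_add_cancel]
    have hsplit : ⟪x, xp⟫ = ⟪xp, xp⟫ + ⟪(W.orthogonalProjectionOnto x : Euc m), xp⟫ := by
      conv_lhs => rw [hx2]
      rw [inner_add_left]
    rw [hsplit, hproj, add_zero] at hxxp
    exact hxxp
  have hxp0 : xp = 0 := by
    have := real_inner_self_nonpos.1 hxpxp
    exact this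
  have : x = (W.orthogonalProjectionOnto x : Euc m) := by
    have := sub_eq_zero.1 hxp0
    exact this
  rw [this]
  exact SetLike.coe_mem _

end TwoNondegAux

/-- **Index-set characterization of 2-nondegeneracy.** -/
theorem twoNondeg_iff_indexSets
    {m q : ℕ} (g : Euc m → Euc q) (hg : ContDiff ℝ 2 g)
    (yb ysb : Euc m) (hyb : yb ∈ Gam g)
    (vb : Euc m) (hvb : vb ∈ KbarS g yb ysb)
    (hne : (LamDir g yb ysb vb).Nonempty)
    (Jhat : Set (Fin q))
    (hJ1 : JplusSet g yb (LamDir g yb ysb vb) ⊆ Jhat)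
    (hJ2 : Jhat ⊆ IbarV g yb vb)
    (hJ3 : ∀ j ∈ IbarV g yb vb \ Jhat,
      gradg g yb j ∈ Submodule.span ℝ ((fun i => gradg g yb i) '' Jhat)) :
    TwoNondeg g yb ysb vb ↔
      ∀ η μ : Fin q → ℝ, (∀ i ∉ Jhat, η i = 0) →
        (∀ i ∉ JplusSet g yb (LamDir g yb ysb vb), μ i = 0) →
        ((∑ i, η i • gradg g yb i) + ∑ i, μ i • hessg g yb i vb = 0) →
        (∑ i, μ i • gradg g yb i) = 0 →
        ∀ i ∈ JplusSet g yb (LamDir g yb ysb vb), μ i = 0 := by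
  classical
  constructor
  · intro H η μ hη hμ h1 h2 i hiJ
    have hμ0 : (WithLp.toLp 2 μ : Euc q) = 0 := by
      refine H (WithLp.toLp 2 μ) ?_ ?_
      · -- `hessLam g yb μ vb ∈ plusSpan (cvxNormal …)`
        have heq : (∑ i, μ i • hessg g yb i vb) = -(∑ i, η i • gradg g yb i) :=
          eq_neg_of_add_eq_zero_right h1
        have key : (∑ i, μ i • hessg g yb i vb) ∈ Submodule.span ℝ
            (cvxNormal (KbarS g yb ysb) vb - cvxNormal (KbarS g yb ysb) vb) := by
          rw [heq]
          refine Submodule.neg_mem _ (Submodule.sum_mem _ (fun j _ => ?_))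
          by_cases h : η j = 0
          · simp [h]
          · have hjJhat : j ∈ Jhat := by
              by_contra hh; exact h (hη j hh)
            have hin : gradg g yb j ∈ cvxNormal (KbarS g yb ysb) vb
                - cvxNormal (KbarS g yb ysb) vb := by
              have := Set.sub_mem_sub (grad_mem_normal g yb ysb vb (hJ2 hjJhat))
                (zero_mem_normal g yb ysb vb)
              simpa using this
            exact Submodule.smul_mem _ _ (Submodule.subset_span hin)
        exact key
      · exact mem_plusSpan_lamDir g yb ysb vb hyb hne (WithLp.toLp 2 μ) hμ h2
    exact congrArg (fun x : Euc q => x i) hμ0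
  · intro H μ hhess hspan
    obtain ⟨hsupp, hsum⟩ := plusSpan_lamDir_subset g yb ysb vb hyb hspan
    set W' : Submodule ℝ (Euc m) := Submodule.span ℝ ((fun i => gradg g yb i) '' Jhat)
      with hW'
    have hWle : Submodule.span ℝ
        (insert ysb ((fun i => gradg g yb i) '' IbarV g yb vb)) ≤ W' := by
      rw [Submodule.span_le, Set.insert_subset_iff]
      constructor
      · obtain ⟨l0, hl0⟩ := hne
        have hrepr : ysb = ∑ i, l0 i • gradg g yb i := hl0.1.2.2.symm
        have : (∑ i, l0 i • gradg g yb i) ∈ W' := by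
          refine Submodule.sum_mem _ (fun j _ => ?_)
          by_cases h : l0 j = 0
          · simp [h]
          · have hjJ : j ∈ Jhat := hJ1 (mem_Jplus g yb ysb vb hyb hl0 h)
            exact Submodule.smul_mem _ _
              (Submodule.subset_span (Set.mem_image_of_mem _ hjJ))
        rw [hrepr]
        exact this
      · rintro _ ⟨i, hi, rfl⟩
        by_cases h : i ∈ Jhat
        · exact Submodule.subset_span (Set.mem_image_of_mem _ h)
        · exact hJ3 i ⟨hi, h⟩
    have hN : hessLam g yb μ vb ∈ W' := by
      have h1 : hessLam g yb μ vb ∈ Submodule.span ℝ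
          (cvxNormal (KbarS g yb ysb) vb - cvxNormal (KbarS g yb ysb) vb) := hhess
      have h2 : Submodule.span ℝ
          (cvxNormal (KbarS g yb ysb) vb - cvxNormal (KbarS g yb ysb) vb)
          ≤ Submodule.span ℝ
            (insert ysb ((fun i => gradg g yb i) '' IbarV g yb vb)) := by
        rw [Submodule.span_le]
        rintro z ⟨u, hu, w, hw, rfl⟩
        exact Submodule.sub_mem _ (normal_subset_span g yb ysb vb hvb hu)
          (normal_subset_span g yb ysb vb hvb hw)
      exact hWle (h2 h1)
    set v' : Fin q → Euc m := fun i => if i ∈ Jhat then gradg g yb i else 0 with hv'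
    have hN2 : hessLam g yb μ vb ∈ Submodule.span ℝ (Set.range v') := by
      refine Submodule.span_le.2 ?_ hN
      rintro _ ⟨i, hi, rfl⟩
      exact Submodule.subset_span ⟨i, by simp [hv', hi]⟩
    obtain ⟨c, hc⟩ := (Submodule.mem_span_range_iff_exists_fun ℝ).1 hN2
    set η : Fin q → ℝ := fun i => if i ∈ Jhat then -(c i) else 0 with hη
    have hterm : ∀ j, η j • gradg g yb j = -(c j • v' j) := by
      intro j
      by_cases h : j ∈ Jhat <;> simp [hη, hv', h, neg_smul]
    have hsum1 : (∑ i, η i • gradg g yb i) + ∑ i, μ i • hessg g yb i vb = 0 := by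
      rw [Finset.sum_congr rfl (fun j _ => hterm j), Finset.sum_neg_distrib, hc]
      exact neg_add_cancel _
    have hzero := H η μ (fun i hi => by simp [hη, hi]) hsupp hsum1 hsum
    exact PiLp.ext fun i => by
      by_cases h : i ∈ JplusSet g yb (LamDir g yb ysb vb)
      · exact hzero i h
      · exact hsupp i h
end
end

section
/- 2-regularity implies 2-nondegeneracy. Let v̄ ∈ K̄_Γ with Λ̄(v̄) ≠ ∅, and let Ĵ be an index set with J̄⁺(Λ̄(v̄)) ⊆ Ĵ ⊆ Ī(v̄) such that for every j ∈ Ī(v̄)∖Ĵ the gradient ∇g_j(ȳ) lies in span{∇g_i(ȳ) : i ∈ Ĵ}. If the mapping h := (g_i)_{i∈Ĵ} is 2-regular at ȳ in direction v̄, i.e. for every α the system ∇h(ȳ)u + v̄ᵀ∇²h(ȳ)w = α, ∇h(ȳ)w = 0 has a solution (u,w), then g is 2-nondegenerate in direction v̄ at (ȳ,ȳ*). -/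
open Set Filter Metric Pointwise
open scoped RealInnerProductSpace

noncomputable section

/-- For a positive function on a fintype there is a uniform positive lower bound. -/
private lemma exists_pos_le_of_pos {ι : Type*} [Fintype ι] (f : ι → ℝ) (hf : ∀ i, 0 < f i) :
    ∃ t : ℝ, 0 < t ∧ ∀ i, t ≤ f i := by
  classical
  have hSne : (insert (1:ℝ) (Finset.univ.image f)).Nonempty := ⟨1, by simp⟩
  refine ⟨(insert (1:ℝ) (Finset.univ.image f)).min' hSne, ?_, ?_⟩
  · rcases Finset.mem_insert.mp (Finset.min'_mem _ hSne) with h | h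
    · rw [h]; norm_num
    · rcases Finset.mem_image.mp h with ⟨i, -, hi⟩
      rw [← hi]; exact hf i
  · intro i
    exact Finset.min'_le _ _ (Finset.mem_insert_of_mem (Finset.mem_image_of_mem f (Finset.mem_univ i)))

/-- Symmetry of the Hessian (as `fderiv` of `gradient`) of a `C²` real function. -/
private lemma hess_symm_aux {m : ℕ} {f : Euc m → ℝ} (hf : ContDiff ℝ 2 f) (yb v w : Euc m) :
    ⟪v, fderiv ℝ (gradient f) yb w⟫ = ⟪w, fderiv ℝ (gradient f) yb v⟫ := by
  set e : StrongDual ℝ (Euc m) ≃ₗᵢ[ℝ] Euc m :=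
    (InnerProductSpace.toDual ℝ (Euc m)).symm with he
  have hd : fderiv ℝ (gradient f) yb =
      ((e.toContinuousLinearEquiv : StrongDual ℝ (Euc m) →L[ℝ] Euc m)).comp
        (fderiv ℝ (fderiv ℝ f) yb) := by
    have h1 : gradient f = (⇑e.toContinuousLinearEquiv) ∘ (fderiv ℝ f) := rfl
    rw [h1]
    exact ContinuousLinearEquiv.comp_fderiv _
  have hf1 : ContDiff ℝ 1 (fderiv ℝ f) := hf.fderiv_right (by norm_num)
  have hsym := second_derivative_symmetric (f := f) (f' := fun y => fderiv ℝ f y)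
      (f'' := fderiv ℝ (fderiv ℝ f) yb)
      (fun y => ((hf.differentiable (by norm_num)) y).hasFDerivAt)
      ((hf1.differentiable (by norm_num) yb).hasFDerivAt)
  rw [hd]
  have happ : ∀ φ : StrongDual ℝ (Euc m), ∀ x : Euc m,
      ⟪x, e.toContinuousLinearEquiv φ⟫ = φ x := by
    intro φ x
    rw [real_inner_comm]
    exact InnerProductSpace.toDual_symm_apply
  simp only [ContinuousLinearMap.comp_apply, ContinuousLinearEquiv.coe_coe]
  rw [happ, happ]
  exact hsym w v

/-- **2-regularity implies 2-nondegeneracy.** -/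
theorem twoNondeg_of_twoRegular
    {m q : ℕ} (g : Euc m → Euc q) (hg : ContDiff ℝ 2 g)
    (yb ysb : Euc m) (hyb : yb ∈ Gam g)
    (vb : Euc m) (hvb : vb ∈ KbarS g yb ysb)
    (hne : (LamDir g yb ysb vb).Nonempty)
    (Jhat : Set (Fin q))
    (hJ1 : JplusSet g yb (LamDir g yb ysb vb) ⊆ Jhat)
    (hJ2 : Jhat ⊆ IbarV g yb vb)
    (hJ3 : ∀ j ∈ IbarV g yb vb \ Jhat,
      gradg g yb j ∈ Submodule.span ℝ ((fun i => gradg g yb i) '' Jhat))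
    (h2reg : ∀ α : Fin q → ℝ, ∃ u w : Euc m,
      (∀ i ∈ Jhat, ⟪gradg g yb i, u⟫ + ⟪vb, hessg g yb i w⟫ = α i) ∧
      (∀ i ∈ Jhat, ⟪gradg g yb i, w⟫ = 0)) :
    TwoNondeg g yb ysb vb := by
  classical
  intro mu hmu1 hmu2
  set V : Submodule ℝ (Euc m) := Submodule.span ℝ ((fun i => gradg g yb i) '' Jhat) with hV
  -- component functions are C²
  have hgi : ∀ i : Fin q, ContDiff ℝ 2 (fun y => g y i) := fun i =>
    ((EuclideanSpace.proj i : Euc q →L[ℝ] ℝ).contDiff.comp hg : ContDiff ℝ 2 _)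
  have hsymm : ∀ (i : Fin q) (v' w' : Euc m),
      ⟪v', hessg g yb i w'⟫ = ⟪w', hessg g yb i v'⟫ := fun i v' w' =>
    hess_symm_aux (hgi i) yb v' w'
  -- any directional multiplier vanishes off `Jhat` and represents `ysb`
  have hLam : ∀ lam ∈ LamDir g yb ysb vb,
      (∀ i, i ∉ Jhat → lam i = 0) ∧ ∑ i, lam i • gradg g yb i = ysb := by
    intro lam hlam
    obtain ⟨⟨hpos, hzero, hsum⟩, -⟩ := id hlam
    refine ⟨fun i hi => ?_, hsum⟩
    by_contra hne0
    have hipos : 0 < lam i := lt_of_le_of_ne (hpos i) (Ne.symm hne0)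
    have hg0 : g yb i = 0 := by
      rcases lt_or_eq_of_le (hyb i) with h | h
      · exact absurd (hzero i h) (ne_of_gt hipos)
      · exact h
    exact hi (hJ1 (Set.mem_iUnion₂.mpr ⟨lam, hlam, hg0, hipos⟩))
  -- properties of `mu`
  have hmu2' : mu ∈ Submodule.span ℝ (LamDir g yb ysb vb - LamDir g yb ysb vb) := hmu2
  have hmuprop : (∀ i, i ∉ Jhat → mu i = 0) ∧ ∑ i, mu i • gradg g yb i = 0 := by
    refine Submodule.span_induction
      (p := fun ν _ => (∀ i, i ∉ Jhat → ν i = 0) ∧ ∑ i, ν i • gradg g yb i = 0)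
      ?_ ?_ ?_ ?_ hmu2'
    · rintro x hx
      rw [Set.mem_sub] at hx
      obtain ⟨a, ha, b, hb, rfl⟩ := hx
      obtain ⟨ha1, ha2⟩ := hLam a ha
      obtain ⟨hb1, hb2⟩ := hLam b hb
      constructor
      · intro i hi
        rw [show (a - b) i = a i - b i from rfl, ha1 i hi, hb1 i hi, sub_zero]
      · have hterm : ∀ i : Fin q, (a - b) i • gradg g yb i
            = a i • gradg g yb i - b i • gradg g yb i := fun i => by
          rw [show (a - b) i = a i - b i from rfl, sub_smul]
        rw [Finset.sum_congr rfl fun i _ => hterm i, Finset.sum_sub_distrib, ha2, hb2, sub_self]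
    · exact ⟨fun i _ => rfl, by simp⟩
    · rintro x y hx hy ⟨hx1, hx2⟩ ⟨hy1, hy2⟩
      constructor
      · intro i hi
        rw [show (x + y) i = x i + y i from rfl, hx1 i hi, hy1 i hi, add_zero]
      · have hterm : ∀ i : Fin q, (x + y) i • gradg g yb i
            = x i • gradg g yb i + y i • gradg g yb i := fun i => by
          rw [show (x + y) i = x i + y i from rfl, add_smul]
        rw [Finset.sum_congr rfl fun i _ => hterm i, Finset.sum_add_distrib, hx2, hy2, add_zero]
    · rintro c x hx ⟨hx1, hx2⟩
      constructor
      · intro i hi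
        rw [show (c • x) i = c * x i from rfl, hx1 i hi, mul_zero]
      · have hterm : ∀ i : Fin q, (c • x) i • gradg g yb i
            = c • (x i • gradg g yb i) := fun i => by
          rw [show (c • x) i = c * x i from rfl, mul_smul]
        rw [Finset.sum_congr rfl fun i _ => hterm i, ← Finset.smul_sum, hx2, smul_zero]
  -- active gradients belong to V
  have hgradV : ∀ j, g yb j = 0 → ⟪gradg g yb j, vb⟫ = 0 → gradg g yb j ∈ V := by
    intro j h1 h2
    by_cases hj : j ∈ Jhat
    · exact Submodule.subset_span ⟨j, hj, rfl⟩
    · exact hJ3 j ⟨⟨h1, h2⟩, hj⟩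
  -- orthogonality to all of V from orthogonality to generators
  have hperp : ∀ w : Euc m, (∀ i ∈ Jhat, ⟪gradg g yb i, w⟫ = 0) →
      ∀ x ∈ V, ⟪x, w⟫ = 0 := by
    intro w hw x hx
    refine Submodule.span_induction (p := fun x _ => ⟪x, w⟫ = 0) ?_ ?_ ?_ ?_ hx
    · rintro x ⟨i, hi, rfl⟩; exact hw i hi
    · exact inner_zero_left w
    · intro a b _ _ ha hb; rw [inner_add_left, ha, hb, add_zero]
    · intro c a _ ha; rw [real_inner_smul_left, ha, mul_zero]
  -- ysb belongs to V
  obtain ⟨lam0, hlam0⟩ := hne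
  obtain ⟨hlam01, hlam02⟩ := hLam lam0 hlam0
  have hysbV : ysb ∈ V := by
    rw [← hlam02]
    refine Submodule.sum_mem _ fun i _ => ?_
    by_cases hi : i ∈ Jhat
    · exact Submodule.smul_mem _ _ (Submodule.subset_span ⟨i, hi, rfl⟩)
    · rw [hlam01 i hi, zero_smul]; exact Submodule.zero_mem _
  -- the normal cone to the critical cone at vb is contained in V
  have hNV : ∀ x ∈ cvxNormal (KbarS g yb ysb) vb, x ∈ V := by
    intro x hx
    have hmemVoo : x ∈ Vᗮᗮ := by
      rw [Submodule.mem_orthogonal]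
      intro w hw
      have hw' : ∀ u ∈ V, ⟪u, w⟫ = 0 := fun u hu => (Submodule.mem_orthogonal V w).mp hw u hu
      have hgw : ∀ j, g yb j = 0 → ⟪gradg g yb j, vb⟫ = 0 → ⟪gradg g yb j, w⟫ = 0 :=
        fun j h1 h2 => hw' _ (hgradV j h1 h2)
      have hysw : ⟪ysb, w⟫ = 0 := hw' _ hysbV
      obtain ⟨t, ht, htle⟩ := exists_pos_le_of_pos
        (fun i => if h : ⟪gradg g yb i, vb⟫ < 0 then
          (-⟪gradg g yb i, vb⟫) / (|⟪gradg g yb i, w⟫| + 1) else 1)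
        (by
          intro i
          by_cases h : ⟪gradg g yb i, vb⟫ < 0
          · rw [dif_pos h]
            exact div_pos (by linarith) (by positivity)
          · rw [dif_neg h]; norm_num)
      have hmem : ∀ s : ℝ, |s| ≤ t → vb + s • w ∈ KbarS g yb ysb := by
        intro s hs
        constructor
        · intro i hgi0
          rw [inner_add_right, real_inner_smul_right]
          rcases lt_or_eq_of_le (hvb.1 i hgi0) with h | h
          · have h3 : t ≤ (-⟪gradg g yb i, vb⟫) / (|⟪gradg g yb i, w⟫| + 1) := by
              have h3' := htle i; rwa [dif_pos h] at h3'
            have hpos : (0:ℝ) < |⟪gradg g yb i, w⟫| + 1 := by positivity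
            have h4 : t * (|⟪gradg g yb i, w⟫| + 1) ≤ -⟪gradg g yb i, vb⟫ :=
              (le_div_iff₀ hpos).mp h3
            have h5 : s * ⟪gradg g yb i, w⟫ ≤ |s| * |⟪gradg g yb i, w⟫| := by
              rw [← abs_mul]; exact le_abs_self _
            nlinarith [abs_nonneg s, abs_nonneg ⟪gradg g yb i, w⟫]
          · rw [hgw i hgi0 h, mul_zero, add_zero, h]
        · rw [inner_add_right, real_inner_smul_right, hvb.2, hysw, mul_zero, add_zero]
      have h1 := hx (vb + t • w) (hmem t (le_of_eq (abs_of_pos ht)))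
      have h2 := hx (vb + (-t) • w)
        (hmem (-t) (by rw [abs_neg]; exact le_of_eq (abs_of_pos ht)))
      rw [add_sub_cancel_left, real_inner_smul_right] at h1 h2
      have hxw : ⟪x, w⟫ = 0 := by nlinarith
      rw [real_inner_comm]; exact hxw
    rwa [Submodule.orthogonal_orthogonal] at hmemVoo
  -- hence so is hessLam mu vb
  have hHV : hessLam g yb mu vb ∈ V := by
    have hle : Submodule.span ℝ
        (cvxNormal (KbarS g yb ysb) vb - cvxNormal (KbarS g yb ysb) vb) ≤ V := by
      rw [Submodule.span_le]
      rintro x hx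
      rw [Set.mem_sub] at hx
      obtain ⟨a, ha, b, hb, rfl⟩ := hx
      exact Submodule.sub_mem _ (hNV a ha) (hNV b hb)
    exact hle hmu1
  -- apply 2-regularity with right-hand side mu
  obtain ⟨u, w, hreg1, hreg2⟩ := h2reg (fun i => mu i)
  have hwV : ∀ x ∈ V, ⟪x, w⟫ = 0 := hperp w hreg2
  have hkey : ⟪hessLam g yb mu vb, w⟫ = 0 := hwV _ hHV
  have hterm : ∀ i : Fin q, mu i * mu i =
      mu i * ⟪gradg g yb i, u⟫ + mu i * ⟪w, hessg g yb i vb⟫ := by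
    intro i
    by_cases hi : i ∈ Jhat
    · rw [← hsymm i vb w, ← mul_add, hreg1 i hi]
    · rw [hmuprop.1 i hi]; ring
  have hsum0 : ∑ i, mu i * mu i = 0 := by
    rw [Finset.sum_congr rfl fun i _ => hterm i, Finset.sum_add_distrib]
    have e1 : ∑ i, mu i * ⟪gradg g yb i, u⟫ = ⟪∑ i, mu i • gradg g yb i, u⟫ := by
      rw [sum_inner]
      exact Finset.sum_congr rfl fun i _ => (real_inner_smul_left _ _ _).symm
    have e2 : ∑ i, mu i * ⟪w, hessg g yb i vb⟫ = ⟪w, hessLam g yb mu vb⟫ := by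
      rw [show hessLam g yb mu vb = ∑ i, mu i • hessg g yb i vb from rfl, inner_sum]
      exact Finset.sum_congr rfl fun i _ => by rw [real_inner_smul_right]
    rw [e1, e2, hmuprop.2, real_inner_comm (hessLam g yb mu vb) w, hkey, inner_zero_left, add_zero]
  have hall : ∀ i, mu i = 0 := fun i => mul_self_eq_zero.mp
    ((Finset.sum_eq_zero_iff_of_nonneg (fun i _ => mul_self_nonneg (mu i))).mp hsum0 i
      (Finset.mem_univ i))
  ext i
  exact hall i
end
end

section
/- Lineality of the tangent cone of a closed convex set. Let C ⊆ ℝ^d be a closed convex set and z̄ ∈ C. Then (T_C(z̄) ∩ (−T_C(z̄)))° = cl(N_C(z̄) − N_C(z̄)) = (N_C(z̄))^+, and consequently T_C(z̄) ∩ (−T_C(z̄)) = ((N_C(z̄))^+)^⊥. Moreover, for every z̄* ∈ N_C(z̄) the critical cone satisfies K_C(z̄,z̄*) ∩ (−K_C(z̄,z̄*)) = T_C(z̄) ∩ (−T_C(z̄)) ∩ [z̄*]^⊥ = T_C(z̄) ∩ (−T_C(z̄)). -/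
open Set Filter Metric Pointwise
open scoped RealInnerProductSpace

noncomputable section

section LinealityAux

variable {d : ℕ} {C : Set (Euc d)} {zb : Euc d}

lemma inner_nonpos_of_normal_tang {x u : Euc d} (hx : x ∈ cvxNormal C zb)
    (hu : u ∈ tangCone C zb) : ⟪x, u⟫ ≤ 0 := by
  obtain ⟨t, w, ht0, htlim, hwlim, hmem⟩ := hu
  have h1 : ∀ k, ⟪x, w k⟫ ≤ 0 := by
    intro k
    have h2 : ⟪x, (zb + t k • w k) - zb⟫ ≤ 0 := hx _ (hmem k)
    rw [add_sub_cancel_left, real_inner_smul_right] at h2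
    nlinarith [ht0 k]
  exact le_of_tendsto (Filter.Tendsto.inner tendsto_const_nhds hwlim)
    (Filter.Eventually.of_forall h1)

/-- The cone generated by `C - zb`. -/
def posCone (C : Set (Euc d)) (zb : Euc d) : Set (Euc d) :=
  {v | ∃ r : ℝ, 0 ≤ r ∧ ∃ y ∈ C, v = r • (y - zb)}

lemma closure_posCone_subset (hCx : Convex ℝ C) (hzb : zb ∈ C) :
    closure (posCone C zb) ⊆ tangCone C zb := by
  intro u hu
  rw [mem_closure_iff_seq_limit] at hu
  obtain ⟨v, hv, hvlim⟩ := hu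
  choose r hr y hy hvy using hv
  refine ⟨fun k => 1 / ((k+1) * (r k + 1)), v, fun k => by have := hr k; positivity, ?_, hvlim, ?_⟩
  · apply squeeze_zero (f := fun k : ℕ => 1/(((k:ℝ)+1) * (r k + 1))) (g := fun k : ℕ => 1/((k:ℝ)+1))
      (fun k => by have := hr k; positivity) ?_ tendsto_one_div_add_atTop_nhds_zero_nat
    intro k
    have hrk := hr k
    rw [div_le_div_iff₀ (by positivity) (by positivity)]
    nlinarith [Nat.cast_nonneg (α := ℝ) k]
  · intro k
    have hrk := hr k
    set t : ℝ := 1 / (((k:ℝ)+1) * (r k + 1)) with htdef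
    have ht0 : 0 < t := by positivity
    have hs1 : t * r k ≤ 1 := by
      rw [htdef, div_mul_eq_mul_div, div_le_one (by positivity)]
      nlinarith [Nat.cast_nonneg (α := ℝ) k]
    have hs0 : 0 ≤ t * r k := by positivity
    have heq : zb + t • v k = (1 - t * r k) • zb + (t * r k) • y k := by
      rw [hvy k, smul_smul]; module
    rw [heq]
    exact hCx hzb (hy k) (by linarith) hs0 (by ring)

lemma tangCone_subset_closure_posCone :
    tangCone C zb ⊆ closure (posCone C zb) := by
  rintro u ⟨t, w, ht0, htlim, hwlim, hmem⟩
  refine mem_closure_iff_seq_limit.2 ⟨w, fun k => ?_, hwlim⟩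
  refine ⟨1 / t k, le_of_lt (by have := ht0 k; positivity), zb + t k • w k, hmem k, ?_⟩
  rw [add_sub_cancel_left, smul_smul, one_div, inv_mul_cancel₀ (ne_of_gt (ht0 k)), one_smul]

lemma posCone_convex (hCx : Convex ℝ C) (hzb : zb ∈ C) : Convex ℝ (posCone C zb) := by
  rintro v1 ⟨r1, hr1, y1, hy1, rfl⟩ v2 ⟨r2, hr2, y2, hy2, rfl⟩ a b ha hb hab
  rcases eq_or_lt_of_le (show (0:ℝ) ≤ a * r1 + b * r2 by positivity) with h0 | h0
  · have h1 : a * r1 = 0 := le_antisymm (by nlinarith) (by positivity)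
    have h2 : b * r2 = 0 := le_antisymm (by nlinarith) (by positivity)
    refine ⟨0, le_refl 0, zb, hzb, ?_⟩
    rw [smul_smul, smul_smul, h1, h2]; simp
  · have hρ0 : a * r1 + b * r2 ≠ 0 := ne_of_gt h0
    refine ⟨a * r1 + b * r2, le_of_lt h0,
      (a*r1/(a*r1+b*r2)) • y1 + (b*r2/(a*r1+b*r2)) • y2,
      hCx hy1 hy2 (by positivity) (by positivity) (by field_simp), ?_⟩
    match_scalars <;> field_simp <;> ring

lemma tangCone_eq_closure (hCx : Convex ℝ C) (hzb : zb ∈ C) :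
    tangCone C zb = closure (posCone C zb) :=
  Subset.antisymm tangCone_subset_closure_posCone (closure_posCone_subset hCx hzb)

lemma tangCone_isClosed (hCx : Convex ℝ C) (hzb : zb ∈ C) : IsClosed (tangCone C zb) := by
  rw [tangCone_eq_closure hCx hzb]; exact isClosed_closure

lemma tangCone_convex (hCx : Convex ℝ C) (hzb : zb ∈ C) : Convex ℝ (tangCone C zb) := by
  rw [tangCone_eq_closure hCx hzb]; exact (posCone_convex hCx hzb).closure

lemma posCone_subset_tangCone (hCx : Convex ℝ C) (hzb : zb ∈ C) :
    posCone C zb ⊆ tangCone C zb :=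
  subset_closure.trans (closure_posCone_subset hCx hzb)

lemma sub_mem_tangCone (hCx : Convex ℝ C) (hzb : zb ∈ C) {y : Euc d} (hy : y ∈ C) :
    y - zb ∈ tangCone C zb :=
  posCone_subset_tangCone hCx hzb ⟨1, zero_le_one, y, hy, (one_smul _ _).symm⟩

lemma zero_mem_tangCone (hCx : Convex ℝ C) (hzb : zb ∈ C) : (0:Euc d) ∈ tangCone C zb :=
  posCone_subset_tangCone hCx hzb ⟨0, le_refl 0, zb, hzb, (zero_smul _ _).symm⟩

lemma smul_mem_tangCone {t : ℝ} (ht : 0 < t) {v : Euc d} (hv : v ∈ tangCone C zb) :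
    t • v ∈ tangCone C zb := by
  obtain ⟨s, w, hs0, hslim, hwlim, hmem⟩ := hv
  refine ⟨fun k => s k / t, fun k => t • w k, fun k => div_pos (hs0 k) ht, ?_,
    hwlim.const_smul t, ?_⟩
  · simpa using hslim.div_const t
  · intro k
    have h : (s k / t) • t • w k = s k • w k := by
      rw [smul_smul, div_mul_cancel₀ _ (ne_of_gt ht)]
    rw [h]; exact hmem k

lemma polar_normal_subset_tangCone (hCx : Convex ℝ C) (hzb : zb ∈ C) :
    polarCone (cvxNormal C zb) ⊆ tangCone C zb := by
  intro u hu
  by_contra hun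
  obtain ⟨f, c, hfc, hcu⟩ :=
    geometric_hahn_banach_closed_point (tangCone_convex hCx hzb) (tangCone_isClosed hCx hzb) hun
  have h0 : (0:ℝ) < c := by
    have := hfc 0 (zero_mem_tangCone hCx hzb); simpa using this
  have hf0 : ∀ v ∈ tangCone C zb, f v ≤ 0 := by
    intro v hv
    by_contra hfv
    push_neg at hfv
    have h1 := hfc _ (smul_mem_tangCone (div_pos (by linarith : (0:ℝ) < c + 1) hfv) hv)
    rw [map_smul, smul_eq_mul, div_mul_cancel₀ _ (ne_of_gt hfv)] at h1
    linarith
  set x := (InnerProductSpace.toDual ℝ (Euc d)).symm f with hxdef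
  have hxN : x ∈ cvxNormal C zb := by
    intro y hy
    have h2 := hf0 _ (sub_mem_tangCone hCx hzb hy)
    rw [show ⟪x, y - zb⟫ = f (y - zb) from InnerProductSpace.toDual_symm_apply]
    exact h2
  have h3 : ⟪u, x⟫ ≤ 0 := hu x hxN
  have h4 : ⟪x, u⟫ = f u := InnerProductSpace.toDual_symm_apply
  rw [real_inner_comm] at h3
  linarith

lemma zero_mem_cvxNormal : (0:Euc d) ∈ cvxNormal C zb := fun y _ => by simp

lemma cvxNormal_smul_mem {c : ℝ} (hc : 0 ≤ c) {x : Euc d} (hx : x ∈ cvxNormal C zb) :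
    c • x ∈ cvxNormal C zb := fun y hy => by
  rw [real_inner_smul_left]
  exact mul_nonpos_of_nonneg_of_nonpos hc (hx y hy)

lemma cvxNormal_add_mem {x x' : Euc d} (hx : x ∈ cvxNormal C zb) (hx' : x' ∈ cvxNormal C zb) :
    x + x' ∈ cvxNormal C zb := fun y hy => by
  rw [inner_add_left]
  linarith [hx y hy, hx' y hy]

/-- `N - N` as a submodule. -/
def normalSub (C : Set (Euc d)) (zb : Euc d) : Submodule ℝ (Euc d) where
  carrier := cvxNormal C zb - cvxNormal C zb
  add_mem' := by
    rintro x y ⟨a, ha, b, hb, rfl⟩ ⟨a', ha', b', hb', rfl⟩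
    exact ⟨a + a', cvxNormal_add_mem ha ha', b + b', cvxNormal_add_mem hb hb', add_sub_add_comm a a' b b'⟩
  zero_mem' := ⟨0, zero_mem_cvxNormal, 0, zero_mem_cvxNormal, by simp⟩
  smul_mem' := by
    rintro c x ⟨a, ha, b, hb, rfl⟩
    rcases le_or_gt 0 c with hc | hc
    · exact ⟨c • a, cvxNormal_smul_mem hc ha, c • b, cvxNormal_smul_mem hc hb,
        (smul_sub c a b).symm⟩
    · exact ⟨(-c) • b, cvxNormal_smul_mem (by linarith) hb,
        (-c) • a, cvxNormal_smul_mem (by linarith) ha, by module⟩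

lemma normalSub_coe : (normalSub C zb : Set (Euc d)) = cvxNormal C zb - cvxNormal C zb := rfl

lemma mem_normalSub_of_normal {a : Euc d} (ha : a ∈ cvxNormal C zb) : a ∈ normalSub C zb :=
  ⟨a, ha, 0, zero_mem_cvxNormal, sub_zero a⟩

lemma inner_eq_zero_of_lineality {a u : Euc d} (ha : a ∈ cvxNormal C zb)
    (hu : u ∈ tangCone C zb ∩ -tangCone C zb) : ⟪a, u⟫ = 0 := by
  obtain ⟨h1, h2⟩ := hu
  have h3 := inner_nonpos_of_normal_tang ha h1
  have h4 := inner_nonpos_of_normal_tang ha (Set.mem_neg.1 h2)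
  rw [inner_neg_right] at h4
  linarith

lemma lineality_eq_orthogonal (hCx : Convex ℝ C) (hzb : zb ∈ C) :
    tangCone C zb ∩ -tangCone C zb = ((normalSub C zb)ᗮ : Set (Euc d)) := by
  ext u
  constructor
  · intro hu
    rw [SetLike.mem_coe, Submodule.mem_orthogonal]
    rintro w ⟨a, ha, b, hb, rfl⟩
    rw [inner_sub_left]
    rw [inner_eq_zero_of_lineality ha hu, inner_eq_zero_of_lineality hb hu]
    ring
  · intro hu
    rw [SetLike.mem_coe, Submodule.mem_orthogonal] at hu
    have key : ∀ a ∈ cvxNormal C zb, ⟪a, u⟫ = 0 := fun a ha =>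
      hu a (mem_normalSub_of_normal ha)
    constructor
    · exact polar_normal_subset_tangCone hCx hzb
        (fun a ha => by rw [real_inner_comm, key a ha])
    · rw [Set.mem_neg]
      exact polar_normal_subset_tangCone hCx hzb
        (fun a ha => by rw [real_inner_comm, inner_neg_right, key a ha]; simp)

end LinealityAux

/-- **Lineality of the tangent cone of a closed convex set.** -/
theorem lineality_tangCone_closed_convex
    {d : ℕ} (C : Set (Euc d)) (hCc : IsClosed C) (hCx : Convex ℝ C)
    (zb : Euc d) (hzb : zb ∈ C) :
    polarCone (tangCone C zb ∩ -tangCone C zb)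
      = closure (cvxNormal C zb - cvxNormal C zb) ∧
    closure (cvxNormal C zb - cvxNormal C zb) = plusSpan (cvxNormal C zb) ∧
    tangCone C zb ∩ -tangCone C zb
      = {x | ∀ y ∈ plusSpan (cvxNormal C zb), ⟪x, y⟫ = 0} ∧
    ∀ zsb ∈ cvxNormal C zb,
      critCone C zb zsb ∩ -critCone C zb zsb
          = tangCone C zb ∩ -tangCone C zb ∩ {u | ⟪zsb, u⟫ = 0} ∧
      critCone C zb zsb ∩ -critCone C zb zsb
          = tangCone C zb ∩ -tangCone C zb := by
  classical
  have hcoe : cvxNormal C zb - cvxNormal C zb = (normalSub C zb : Set (Euc d)) := rfl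
  have h_plusSpan : plusSpan (cvxNormal C zb) = (normalSub C zb : Set (Euc d)) := by
    unfold plusSpan
    rw [hcoe, Submodule.span_eq]
  have h_closure : closure (cvxNormal C zb - cvxNormal C zb)
      = (normalSub C zb : Set (Euc d)) := by
    rw [hcoe]
    exact (Submodule.closed_of_finiteDimensional _).closure_eq
  have h_L := lineality_eq_orthogonal (C := C) (zb := zb) hCx hzb
  have h_polar : polarCone (tangCone C zb ∩ -tangCone C zb)
      = (normalSub C zb : Set (Euc d)) := by
    rw [h_L]
    ext x
    constructor
    · intro hx
      have hmem : x ∈ (normalSub C zb)ᗮᗮ := by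
        rw [Submodule.mem_orthogonal]
        intro w hw
        have h1 := hx w hw
        have h2 := hx (-w) (neg_mem hw)
        rw [inner_neg_right] at h2
        rw [real_inner_comm]
        linarith
      rwa [Submodule.orthogonal_orthogonal] at hmem
    · rintro hx u hu
      rw [SetLike.mem_coe, Submodule.mem_orthogonal] at hu
      exact le_of_eq (hu x hx)
  refine ⟨h_polar.trans h_closure.symm, h_closure.trans h_plusSpan.symm, ?_, ?_⟩
  · rw [h_plusSpan, h_L]
    ext x
    simp only [SetLike.mem_coe, Submodule.mem_orthogonal, Set.mem_setOf_eq]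
    constructor
    · intro h y hy; rw [real_inner_comm]; exact h y hy
    · intro h y hy; rw [real_inner_comm]; exact h y hy
  · intro zsb hzs
    have hK : ∀ u, u ∈ critCone C zb zsb ∩ -critCone C zb zsb ↔
        u ∈ tangCone C zb ∩ -tangCone C zb ∧ ⟪zsb, u⟫ = 0 := by
      intro u
      simp only [critCone, Set.mem_inter_iff, Set.mem_neg, Set.mem_setOf_eq, inner_neg_right,
        neg_eq_zero]
      tauto
    have hsub : ∀ u ∈ tangCone C zb ∩ -tangCone C zb, ⟪zsb, u⟫ = 0 :=
      fun u hu => inner_eq_zero_of_lineality hzs hu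
    constructor
    · ext u
      rw [hK u]
      simp only [Set.mem_inter_iff, Set.mem_setOf_eq]
    · ext u
      rw [hK u]
      exact ⟨fun h => h.1, fun h => ⟨h, hsub u h⟩⟩
end
end

section
/- Generalized lineality space of the graph of the normal cone map. Let C ⊆ ℝ^d be a closed convex set. Then for every z̄ ∈ C one has N_C(z̄) ∩ (−N_C(z̄)) = (span(C − C))^⊥, and the generalized lineality space of gph N_C satisfies ℒ(gph N_C) = ℒ(C) × (span(C − C))^⊥. -/
open Set Filter Metric Pointwise
open scoped RealInnerProductSpace

noncomputable section

lemma mem_linealSpace_iff' {E : Type*} [AddCommGroup E] [Module ℝ E] (C : Set E) (x : E) :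
    x ∈ linealSpace C ↔ ∀ (a : ℝ), ∀ c ∈ C, c + a • x ∈ C := by
  constructor
  · intro hx
    have hdir : DirectedOn (· ≤ ·) {L : Submodule ℝ E | C + (L : Set E) ⊆ C} := by
      intro L1 h1 L2 h2
      refine ⟨L1 ⊔ L2, ?_, le_sup_left, le_sup_right⟩
      intro w hw
      rcases Set.mem_add.mp hw with ⟨c, hc, y, hy, rfl⟩
      rcases Submodule.mem_sup.mp hy with ⟨y1, hy1, y2, hy2, rfl⟩
      have h1' : c + y1 ∈ C := h1 (Set.add_mem_add hc hy1)
      have := h2 (Set.add_mem_add h1' hy2)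
      simpa [add_assoc] using this
    have hne : {L : Submodule ℝ E | C + (L : Set E) ⊆ C}.Nonempty := by
      refine ⟨⊥, ?_⟩
      intro w hw
      rcases Set.mem_add.mp hw with ⟨c, hc, y, hy, rfl⟩
      simp only [Submodule.bot_coe, Set.mem_singleton_iff] at hy
      simpa [hy] using hc
    have hx' : x ∈ sSup {L : Submodule ℝ E | C + (L : Set E) ⊆ C} := hx
    rcases (Submodule.mem_sSup_of_directed hne hdir).mp hx' with ⟨L, hL, hxL⟩
    intro a c hc
    exact hL (Set.add_mem_add hc (L.smul_mem a hxL))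
  · intro h
    have hmem : Submodule.span ℝ {x} ∈ {L : Submodule ℝ E | C + (L : Set E) ⊆ C} := by
      intro w hw
      rcases Set.mem_add.mp hw with ⟨c, hc, y, hy, rfl⟩
      rcases Submodule.mem_span_singleton.mp hy with ⟨a, rfl⟩
      exact h a c hc
    exact le_sSup hmem (Submodule.mem_span_singleton_self x)

lemma mem_span_sub_orthogonal' {E : Type*} [NormedAddCommGroup E] [InnerProductSpace ℝ E]
    (C : Set E) (x : E) :
    x ∈ (Submodule.span ℝ (C - C))ᗮ ↔ ∀ y ∈ C, ∀ z ∈ C, ⟪x, y - z⟫ = 0 := by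
  rw [Submodule.mem_orthogonal]
  constructor
  · intro h y hy z hz
    have := h (y - z) (Submodule.subset_span (Set.sub_mem_sub hy hz))
    rwa [real_inner_comm] at this
  · intro h u hu
    induction hu using Submodule.span_induction with
    | mem u hu =>
        rcases Set.mem_sub.mp hu with ⟨y, hy, z, hz, rfl⟩
        rw [real_inner_comm]; exact h y hy z hz
    | zero => simp
    | add u v _ _ hu hv => rw [inner_add_left, hu, hv]; ring
    | smul a u _ hu => rw [inner_smul_left, hu]; simp

/-- **Generalized lineality space of the graph of the normal cone map.** -/
theorem linealSpace_gphCvxNormal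
    {d : ℕ} (C : Set (Euc d)) (hCc : IsClosed C) (hCx : Convex ℝ C) :
    (∀ zb ∈ C, cvxNormal C zb ∩ -cvxNormal C zb
        = ((Submodule.span ℝ (C - C))ᗮ : Set (Euc d))) ∧
    linealSpace (gphCvxNormal C)
      = linealSpace C ×ˢ ((Submodule.span ℝ (C - C))ᗮ : Set (Euc d)) := by
  constructor
  · intro zb hzb
    ext x
    simp only [Set.mem_inter_iff, Set.mem_neg, SetLike.mem_coe]
    rw [mem_span_sub_orthogonal']
    constructor
    · rintro ⟨h1, h2⟩ y hy z hz
      have hy1 : ⟪x, y - zb⟫ = 0 := le_antisymm (h1 y hy) (by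
        have := h2 y hy; simp only [inner_neg_left] at this; linarith)
      have hz1 : ⟪x, z - zb⟫ = 0 := le_antisymm (h1 z hz) (by
        have := h2 z hz; simp only [inner_neg_left] at this; linarith)
      have : y - z = (y - zb) - (z - zb) := by abel
      rw [this, inner_sub_right, hy1, hz1]; ring
    · intro h
      constructor
      · intro y hy; rw [h y hy zb hzb]
      · intro y hy; rw [inner_neg_left, h y hy zb hzb]; simp
  · ext p
    obtain ⟨u, v⟩ := p
    rw [Set.mem_prod]
    show (u, v) ∈ linealSpace (gphCvxNormal C) ↔ _
    rw [mem_linealSpace_iff', mem_linealSpace_iff' (E := Euc d)]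
    simp only [SetLike.mem_coe]
    rw [mem_span_sub_orthogonal']
    constructor
    · intro h
      rcases C.eq_empty_or_nonempty with rfl | ⟨z, hz⟩
      · exact ⟨fun a c hc => absurd hc (Set.notMem_empty c),
          fun y hy => absurd hy (Set.notMem_empty y)⟩
      · have hzero : ∀ c ∈ C, (c, (0 : Euc d)) ∈ gphCvxNormal C := by
          intro c hc
          exact ⟨hc, fun y hy => by simp⟩
        have hu : ∀ (a : ℝ), ∀ c ∈ C, c + a • u ∈ C := by
          intro a c hc
          exact (h a (c, 0) (hzero c hc)).1
        refine ⟨hu, ?_⟩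
        intro y hy y' hy'
        have key : ∀ a : ℝ, a * ⟪v, y - y'⟫ ≤ 2 * a ^ 2 * ⟪v, u⟫ := by
          intro a
          have h1 := (h a (z, 0) (hzero z hz)).2 y hy
          have h2 := (h (-a) (z, 0) (hzero z hz)).2 y' hy'
          simp only [Prod.fst_add, Prod.snd_add, Prod.smul_snd, Prod.smul_fst,
            zero_add, smul_eq_mul] at h1 h2
          simp only [inner_smul_left, inner_sub_right, inner_add_right,
            inner_smul_right, RCLike.ofReal_real_eq_id, id_eq, conj_trivial] at h1 h2 ⊢
          nlinarith [h1, h2]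
        set s := ⟪v, y - y'⟫ with hs
        set t := ⟪v, u⟫ with ht
        have ht0 : 0 ≤ t := by nlinarith [key 1, key (-1)]
        rcases eq_or_lt_of_le ht0 with h0 | h0
        · nlinarith [key 1, key (-1)]
        · have h4 : t ≠ 0 := ne_of_gt h0
          have hk := key (s / (4 * t))
          have e1 : s / (4 * t) * s = s ^ 2 / (4 * t) := by ring
          have e2 : 2 * (s / (4 * t)) ^ 2 * t = s ^ 2 / (8 * t) := by
            field_simp; ring
          rw [e1, e2, div_le_div_iff₀ (by positivity) (by positivity)] at hk
          have hks : s ^ 2 = 0 := le_antisymm (by nlinarith [hk, h0]) (sq_nonneg s)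
          exact pow_eq_zero_iff two_ne_zero |>.mp hks
    · rintro ⟨hu, hv⟩ a ⟨zq, zs⟩ ⟨hzq, hzs⟩
      have hzu : ⟪zs, u⟫ = 0 := by
        have p1 := hzs (zq + (1 : ℝ) • u) (hu 1 zq hzq)
        have p2 := hzs (zq + (-1 : ℝ) • u) (hu (-1) zq hzq)
        simp only [one_smul, neg_smul, add_sub_cancel_left] at p1 p2
        rw [inner_neg_right] at p2
        linarith
      refine ⟨hu a zq hzq, ?_⟩
      intro y hy
      have hc' : zq + a • u ∈ C := hu a zq hzq
      have hvy : ⟪v, y - (zq + a • u)⟫ = 0 := hv y hy (zq + a • u) hc'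
      have hsy : ⟪zs, y - zq⟫ ≤ 0 := hzs y hy
      show ⟪zs + a • v, y - (zq + a • u)⟫ ≤ 0
      simp only [inner_add_left, inner_sub_right, inner_add_right,
        real_inner_smul_left, inner_smul_right] at hvy hsy ⊢
      have hvy2 : a * (⟪v, y⟫ - (⟪v, zq⟫ + a * ⟪v, u⟫)) = 0 := by rw [hvy, mul_zero]
      have hzu2 : a * ⟪zs, u⟫ = 0 := by rw [hzu, mul_zero]
      nlinarith [hvy2, hsy, hzu2]
end
end

section
/- The optimality conditions of Corollary 6.4 imply M-stationarity for (MPCC). Let (x̄,ȳ,λ̄) be feasible for (MPCC) (i.e. 0 = φ(x̄,ȳ) + ∇g(ȳ)ᵀλ̄, 0 ≤ −g(ȳ) ⊥ λ̄ ≥ 0, G(x̄,ȳ) ≤ 0), set ȳ* := −φ(x̄,ȳ), and assume the multiplier set Λ̄ = {λ̄} is a singleton. Suppose there exist v̄ ∈ K̄_Γ, an index set I⁺ with J̄⁺(λ̄) ⊆ I⁺ ⊆ Ī(v̄), and elements w ∈ ℝ^m, ξ ∈ ℝ^q, σ ∈ ℝ^p with σ ≥ 0 such that: 0 = ∇_xF(x̄,ȳ)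 − ∇_xφ(x̄,ȳ)ᵀw + ∇_xG(x̄,ȳ)ᵀσ; 0 = ∇_yF(x̄,ȳ) − ∇_yφ(x̄,ȳ)ᵀw + ∇_yG(x̄,ȳ)ᵀσ − ∇²(λ̄ᵀg)(ȳ)w + ∇g(ȳ)ᵀξ; ξ_i = 0 if i ∉ Ī(v̄); ξ_i ≥ 0 and ∇g_i(ȳ)ᵀw ≤ 0 if i ∈ Ī(v̄)∖I⁺; ∇g_i(ȳ)ᵀw = 0 if i ∈ I⁺; σ_iG_i(x̄,ȳ) = 0 for all i. Then the same w, ξ, σ satisfy the M-stationarity conditions for (MPCC) at (x̄,ȳ,λ̄): 0 = ∇_xF(x̄,ȳ) − ∇_xφ(x̄,ȳ)ᵀw + ∇_xG(x̄,ȳ)ᵀσ; 0 = ∇_yF(x̄,ȳ) − ∇_yφ(x̄,ȳ)ᵀw + ∇_yG(x̄,ȳ)ᵀσ − ∇²(λ̄ᵀg)(ȳ)w + ∇g(ȳ)ᵀξ; ξ_i = 0 whenever g_i(ȳ) < 0 and λ̄_i = 0; ∇g_i(ȳ)ᵀw = 0 whenever g_i(ȳ) = 0 and λ̄_i > 0;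 for every i with g_i(ȳ) = λ̄_i = 0, either (ξ_i > 0 and ∇g_i(ȳ)ᵀw < 0) or ξ_i·∇g_i(ȳ)ᵀw = 0; and σ_iG_i(x̄,ȳ) = 0 for all i. -/
open Set Filter Metric Pointwise
open scoped RealInnerProductSpace

noncomputable section

/-- **Corollary 6.4 conditions imply M-stationarity for (MPCC).** -/
theorem corollary_conditions_imply_MPCC_Mstationarity
    {n m p q : ℕ}
    (Fobj : Euc n × Euc m → ℝ) (φ : Euc n × Euc m → Euc m)
    (G : Euc n × Euc m → Euc p) (g : Euc m → Euc q)
    (hF : ContDiff ℝ 1 Fobj) (hφ : ContDiff ℝ 1 φ) (hG : ContDiff ℝ 1 G)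
    (hg : ContDiff ℝ 2 g)
    (xb : Euc n) (yb : Euc m) (lamb : Euc q)
    -- feasibility of (x̄,ȳ,λ̄) for (MPCC)
    (hfeas1 : φ (xb, yb) + ∑ i, lamb i • gradg g yb i = 0)
    (hfeas2 : ∀ i, g yb i ≤ 0 ∧ 0 ≤ lamb i ∧ lamb i * g yb i = 0)
    (hfeas3 : ∀ i, G (xb, yb) i ≤ 0)
    (ysb : Euc m) (hys : ysb = -φ (xb, yb))
    (hLam : LamS g yb ysb = {lamb})
    (vb : Euc m) (hvb : vb ∈ KbarS g yb ysb)
    (Ip : Set (Fin q)) (hIp1 : JplusLam g yb lamb ⊆ Ip) (hIp2 : Ip ⊆ IbarV g yb vb)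
    (w : Euc m) (ξ : Euc q) (σ : Euc p) (hσ : ∀ i, 0 ≤ σ i)
    (ha : 0 = gradient (fun x => Fobj (x, yb)) xb
      - ContinuousLinearMap.adjoint (fderiv ℝ (fun x => φ (x, yb)) xb) w
      + ContinuousLinearMap.adjoint (fderiv ℝ (fun x => G (x, yb)) xb) σ)
    (hb : 0 = gradient (fun y => Fobj (xb, y)) yb
      - ContinuousLinearMap.adjoint (fderiv ℝ (fun y => φ (xb, y)) yb) w
      + ContinuousLinearMap.adjoint (fderiv ℝ (fun y => G (xb, y)) yb) σ
      - hessLam g yb lamb w + ∑ i, ξ i • gradg g yb i)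
    (hc : ∀ i ∉ IbarV g yb vb, ξ i = 0)
    (hd : ∀ i ∈ IbarV g yb vb \ Ip, 0 ≤ ξ i ∧ ⟪gradg g yb i, w⟫ ≤ 0)
    (he : ∀ i ∈ Ip, ⟪gradg g yb i, w⟫ = 0)
    (hf : ∀ i, σ i * G (xb, yb) i = 0) :
    (0 = gradient (fun x => Fobj (x, yb)) xb
      - ContinuousLinearMap.adjoint (fderiv ℝ (fun x => φ (x, yb)) xb) w
      + ContinuousLinearMap.adjoint (fderiv ℝ (fun x => G (x, yb)) xb) σ) ∧
    (0 = gradient (fun y => Fobj (xb, y)) yb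
      - ContinuousLinearMap.adjoint (fderiv ℝ (fun y => φ (xb, y)) yb) w
      + ContinuousLinearMap.adjoint (fderiv ℝ (fun y => G (xb, y)) yb) σ
      - hessLam g yb lamb w + ∑ i, ξ i • gradg g yb i) ∧
    (∀ i, g yb i < 0 → lamb i = 0 → ξ i = 0) ∧
    (∀ i, g yb i = 0 → 0 < lamb i → ⟪gradg g yb i, w⟫ = 0) ∧
    (∀ i, g yb i = 0 → lamb i = 0 →
      ((0 < ξ i ∧ ⟪gradg g yb i, w⟫ < 0) ∨ ξ i * ⟪gradg g yb i, w⟫ = 0)) ∧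
    (∀ i, σ i * G (xb, yb) i = 0) := by
  refine ⟨ha, hb, ?_, ?_, ?_, hf⟩
  · intro i hg _
    exact hc i (fun h => absurd h.1 (ne_of_lt hg))
  · intro i hg0 hl
    exact he i (hIp1 ⟨hg0, hl⟩)
  · intro i hg0 _
    by_cases hi : i ∈ Ip
    · exact Or.inr (by rw [he i hi, mul_zero])
    · by_cases hv : i ∈ IbarV g yb vb
      · obtain ⟨h1, h2⟩ := hd i ⟨hv, hi⟩
        rcases lt_or_eq_of_le h1 with h1' | h1'
        · rcases lt_or_eq_of_le h2 with h2' | h2'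
          · exact Or.inl ⟨h1', h2'⟩
          · exact Or.inr (by rw [h2', mul_zero])
        · exact Or.inr (by rw [← h1', zero_mul])
      · exact Or.inr (by rw [hc i hv, zero_mul])
end
end
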